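/- arXiv:1007.2937 — 4 statements merged into one kernel-verified Lean document; each statement's English description precedes it below -/
import Mathlib

section
/- Let 0<α<1 and a<b be reals. Let f:[a,b]→ℝ be continuously differentiable and let g:[a,b]→ℝ be continuous and such that the right Riemann–Liouville derivative D_{b−}^α g exists and is continuous on [a,b]. Then ∫_a^b g(x)·(^C D_{a+}^α f)(x) dx = ∫_a^b f(x)·(D_{b−}^α g)(x) dx + [(I_{b−}^{1−α} g)(x)·f(x)]_{x=a}^{x=b}, i.e. the boundary term is (I_{b−}^{1−α} g)(b)·f(b) − (I_{b−}^{1−α} g)(a)·f(a). -/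
open MeasureTheory Set

/-- Left Caputo fractional derivative of order `α` with base point `a`. -/
noncomputable def caputoLeft (a α : ℝ) (f : ℝ → ℝ) (x : ℝ) : ℝ :=
  (1 / Real.Gamma (1 - α)) * ∫ t in a..x, (x - t) ^ (-α) * deriv f t

/-- Right Caputo fractional derivative of order `α` with base point `b`. -/
noncomputable def caputoRight (b α : ℝ) (f : ℝ → ℝ) (x : ℝ) : ℝ :=
  -((1 / Real.Gamma (1 - α)) * ∫ t in x..b, (t - x) ^ (-α) * deriv f t)

/-- Left Riemann–Liouville fractional integral of order `α` with base point `a`. -/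
noncomputable def rlLeftInt (a α : ℝ) (f : ℝ → ℝ) (x : ℝ) : ℝ :=
  (1 / Real.Gamma α) * ∫ t in a..x, (x - t) ^ (α - 1) * f t

/-- Right Riemann–Liouville fractional integral of order `α` with base point `b`. -/
noncomputable def rlRightInt (b α : ℝ) (f : ℝ → ℝ) (x : ℝ) : ℝ :=
  (1 / Real.Gamma α) * ∫ t in x..b, (t - x) ^ (α - 1) * f t

/-- Left Riemann–Liouville fractional derivative of order `α` with base point `a`. -/
noncomputable def rlLeftDeriv (a α : ℝ) (f : ℝ → ℝ) (x : ℝ) : ℝ :=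
  deriv (fun s => (1 / Real.Gamma (1 - α)) * ∫ t in a..s, (s - t) ^ (-α) * f t) x

/-- Right Riemann–Liouville fractional derivative of order `α` with base point `b`. -/
noncomputable def rlRightDeriv (b α : ℝ) (f : ℝ → ℝ) (x : ℝ) : ℝ :=
  -deriv (fun s => (1 / Real.Gamma (1 - α)) * ∫ t in s..b, (t - s) ^ (-α) * f t) x

/-- `f` is continuously differentiable on `[a,b]`. -/
def C1On (f : ℝ → ℝ) (a b : ℝ) : Prop :=
  (∀ x ∈ Set.Icc a b, DifferentiableAt ℝ f x) ∧ ContinuousOn (deriv f) (Set.Icc a b)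

/-- The left Riemann–Liouville derivative of `g` of order `α` with base point `c`
exists and is continuous on the set `s`. -/
def HasContRlLeftDeriv (c α : ℝ) (g : ℝ → ℝ) (s : Set ℝ) : Prop :=
  (∀ x ∈ s, DifferentiableAt ℝ
      (fun u => (1 / Real.Gamma (1 - α)) * ∫ t in c..u, (u - t) ^ (-α) * g t) x) ∧
  ContinuousOn (rlLeftDeriv c α g) s

/-- The right Riemann–Liouville derivative of `g` of order `α` with base point `c`
exists and is continuous on the set `s`. -/
def HasContRlRightDeriv (c α : ℝ) (g : ℝ → ℝ) (s : Set ℝ) : Prop :=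
  (∀ x ∈ s, DifferentiableAt ℝ
      (fun u => (1 / Real.Gamma (1 - α)) * ∫ t in u..c, (t - u) ^ (-α) * g t) x) ∧
  ContinuousOn (rlRightDeriv c α g) s

/-- Integration by parts for the left Caputo derivative:
`∫_a^b g·(^CD_{a+}^α f) = ∫_a^b f·(D_{b−}^α g) + [(I_{b−}^{1−α} g)·f]_a^b`. -/
theorem caputo_left_integration_by_parts
    (α a b : ℝ) (hα0 : 0 < α) (hα1 : α < 1) (hab : a < b)
    (f g : ℝ → ℝ) (hf : C1On f a b)
    (hg : ContinuousOn g (Set.Icc a b))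
    (hgD : HasContRlRightDeriv b α g (Set.Icc a b)) :
    ∫ x in a..b, g x * caputoLeft a α f x
      = (∫ x in a..b, f x * rlRightDeriv b α g x)
        + (rlRightInt b (1 - α) g b * f b - rlRightInt b (1 - α) g a * f a) := by
  have hα0' : (0:ℝ) < 1 - α := by linarith
  have hΓ : 0 < Real.Gamma (1 - α) := Real.Gamma_pos_of_pos hα0'
  have hneg : (-1:ℝ) < -α := by linarith
  -- bounds for `deriv f` and `g` on `Icc a b`
  obtain ⟨M, hM⟩ := (isCompact_Icc (a := a) (b := b)).exists_bound_of_continuousOn hf.2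
  obtain ⟨N, hN⟩ := (isCompact_Icc (a := a) (b := b)).exists_bound_of_continuousOn hg
  have hM0 : 0 ≤ M := le_trans (norm_nonneg _) (hM a ⟨le_refl a, hab.le⟩)
  have hN0 : 0 ≤ N := le_trans (norm_nonneg _) (hN a ⟨le_refl a, hab.le⟩)
  -- measurability of the kernel
  have hrpow_meas : Measurable (fun x : ℝ => x ^ (-α)) :=
    measurable_of_continuousOn_compl_singleton 0
      (fun x hx => (Real.continuousAt_rpow_const x (-α) (Or.inl hx)).continuousWithinAt)
  -- interval integrability of the kernel
  have hker : ∀ x : ℝ, IntervalIntegrable (fun t => (x - t) ^ (-α)) volume a x := by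
    intro x
    have h1 : IntervalIntegrable (fun u : ℝ => u ^ (-α)) volume 0 (x - a) :=
      intervalIntegral.intervalIntegrable_rpow' hneg
    simpa using (h1.comp_sub_left x).symm
  -- value of the kernel integral
  have hkerval : ∀ x : ℝ, ∫ t in a..x, (x - t) ^ (-α) = (x - a) ^ (1 - α) / (1 - α) := by
    intro x
    rw [intervalIntegral.integral_comp_sub_left (fun u => u ^ (-α)) x, sub_self,
      integral_rpow (Or.inl hneg), Real.zero_rpow (by linarith : -α + 1 ≠ 0),
      show -α + 1 = 1 - α by ring, sub_zero]
  -- the two-variable kernel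
  set H : ℝ × ℝ → ℝ :=
    fun p => g p.1 * ((1 / Real.Gamma (1 - α)) * ((p.1 - p.2) ^ (-α) * deriv f p.2)) with hH
  set F : ℝ × ℝ → ℝ := fun p => if p.2 ≤ p.1 then H p else 0 with hFdef
  set μ : Measure ℝ := volume.restrict (Set.Ioc a b) with hμ
  have hprod : μ.prod μ = (volume.prod volume).restrict (Set.Ioc a b ×ˢ Set.Ioc a b) :=
    Measure.prod_restrict _ _
  have hHm : AEStronglyMeasurable H (μ.prod μ) := by
    rw [hprod]
    have h1 : ContinuousOn (fun p : ℝ × ℝ => g p.1) (Set.Ioc a b ×ˢ Set.Ioc a b) :=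
      (hg.mono Set.Ioc_subset_Icc_self).comp continuous_fst.continuousOn
        (fun p hp => hp.1)
    have h2 : ContinuousOn (fun p : ℝ × ℝ => deriv f p.2) (Set.Ioc a b ×ˢ Set.Ioc a b) :=
      (hf.2.mono Set.Ioc_subset_Icc_self).comp continuous_snd.continuousOn
        (fun p hp => hp.2)
    have h3 : Measurable (fun p : ℝ × ℝ => (p.1 - p.2) ^ (-α)) :=
      hrpow_meas.comp (measurable_fst.sub measurable_snd)
    exact (h1.aestronglyMeasurable (measurableSet_Ioc.prod measurableSet_Ioc)).mul
      (aestronglyMeasurable_const.mul (h3.aestronglyMeasurable.mul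
        (h2.aestronglyMeasurable (measurableSet_Ioc.prod measurableSet_Ioc))))
  have hFm : AEStronglyMeasurable F (μ.prod μ) := by
    have : F = Set.indicator {p : ℝ × ℝ | p.2 ≤ p.1} H := by
      funext p; simp [hFdef, Set.indicator_apply, Set.mem_setOf_eq]
    rw [this]
    exact hHm.indicator (measurableSet_le measurable_snd measurable_fst)
  -- representation of the sections in `t`
  have hFrep : ∀ x, Set.EqOn (fun t => F (x, t))
      ((Set.Ioc a x).indicator
        (fun t => g x * ((1 / Real.Gamma (1 - α)) * ((x - t) ^ (-α) * deriv f t))))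
      (Set.Ioc a b) := by
    intro x t ht
    by_cases h : t ≤ x
    · have hmem : t ∈ Set.Ioc a x := ⟨ht.1, h⟩
      simp [hFdef, hH, h, Set.indicator_of_mem hmem]
    · have hnmem : t ∉ Set.Ioc a x := fun hmem => h hmem.2
      simp [hFdef, h, Set.indicator_of_notMem hnmem]
  -- interval integrability of the sections in `t`
  have hInner : ∀ x ∈ Set.Icc a b, IntervalIntegrable
      (fun t => g x * ((1 / Real.Gamma (1 - α)) * ((x - t) ^ (-α) * deriv f t)))
      volume a x := by
    intro x hx
    have hcont : ContinuousOn (deriv f) (Set.uIcc a x) :=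
      hf.2.mono (by rw [Set.uIcc_of_le hx.1]; exact Set.Icc_subset_Icc le_rfl hx.2)
    exact (((hker x).mul_continuousOn hcont).const_mul _).const_mul _
  -- inner integral identity (sections in `t`)
  have hIntInner : ∀ x ∈ Set.Icc a b,
      ∫ t, F (x, t) ∂μ = g x * caputoLeft a α f x := by
    intro x hx
    rw [hμ, setIntegral_congr_fun measurableSet_Ioc (hFrep x),
      setIntegral_indicator measurableSet_Ioc,
      show Set.Ioc a b ∩ Set.Ioc a x = Set.Ioc a x by
        rw [Set.Ioc_inter_Ioc]; simp [min_eq_right hx.2],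
      ← intervalIntegral.integral_of_le hx.1,
      intervalIntegral.integral_const_mul, intervalIntegral.integral_const_mul]
    rfl
  -- representation of the sections in `x`
  have hFrep' : ∀ t ∈ Set.Icc a b, Set.EqOn (fun x => F (x, t))
      ((Set.Ioc t b).indicator
        (fun x => g x * ((1 / Real.Gamma (1 - α)) * ((x - t) ^ (-α) * deriv f t))))
      (Set.Ioc a b) := by
    intro t ht x hx
    rcases lt_trichotomy x t with h | h | h
    · have h1 : ¬ t ≤ x := not_le.2 h
      have hnmem : x ∉ Set.Ioc t b := fun hm => absurd hm.1 (not_lt.2 h.le)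
      simp [hFdef, h1, Set.indicator_of_notMem hnmem]
    · subst h
      have hnmem : x ∉ Set.Ioc x b := fun hm => lt_irrefl x hm.1
      simp [hFdef, hH, Set.indicator_of_notMem hnmem, sub_self,
        Real.zero_rpow (by linarith : -α ≠ 0)]
    · have hmem : x ∈ Set.Ioc t b := ⟨h, hx.2⟩
      simp [hFdef, hH, h.le, Set.indicator_of_mem hmem]
  -- the function `G = I_{b-}^{1-α} g`
  set G : ℝ → ℝ :=
    fun u => (1 / Real.Gamma (1 - α)) * ∫ t in u..b, (t - u) ^ (-α) * g t with hGdef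
  -- inner integral identity (sections in `x`)
  have hIntInner' : ∀ t ∈ Set.Icc a b,
      ∫ x, F (x, t) ∂μ = deriv f t * G t := by
    intro t ht
    rw [hμ, setIntegral_congr_fun measurableSet_Ioc (hFrep' t ht),
      setIntegral_indicator measurableSet_Ioc,
      show Set.Ioc a b ∩ Set.Ioc t b = Set.Ioc t b by
        rw [Set.Ioc_inter_Ioc]; simp [max_eq_right ht.1],
      ← intervalIntegral.integral_of_le ht.2,
      intervalIntegral.integral_congr
        (g := fun x => (deriv f t * (1 / Real.Gamma (1 - α))) * ((x - t) ^ (-α) * g x))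
        (fun x _ => by ring),
      intervalIntegral.integral_const_mul, mul_assoc, hGdef]
  -- integrability of `F` on the product
  have hFint : Integrable F (μ.prod μ) := by
    rw [MeasureTheory.integrable_prod_iff hFm]
    constructor
    · filter_upwards [ae_restrict_mem measurableSet_Ioc] with x hx
      have hx' : x ∈ Set.Icc a b := Set.Ioc_subset_Icc_self hx
      have h1 : IntegrableOn
          (fun t => g x * ((1 / Real.Gamma (1 - α)) * ((x - t) ^ (-α) * deriv f t)))
          (Set.Ioc a x) volume := ((hInner x hx').1)
      have h2 := (h1.integrable_indicator measurableSet_Ioc).integrableOn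
        (s := Set.Ioc a b)
      exact h2.congr_fun (hFrep x).symm measurableSet_Ioc
    · refine Integrable.mono' (g := fun _ => (N * ((1 / Real.Gamma (1 - α)) * M)) *
        ((b - a) ^ (1 - α) / (1 - α)))
        (by rw [hμ]; exact integrableOn_const measure_Ioc_lt_top.ne)
        (hFm.norm.integral_prod_right') ?_
      filter_upwards [ae_restrict_mem measurableSet_Ioc] with x hx
      have hx' : x ∈ Set.Icc a b := Set.Ioc_subset_Icc_self hx
      have hnn : 0 ≤ ∫ t, ‖F (x, t)‖ ∂μ := integral_nonneg fun t => norm_nonneg _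
      rw [Real.norm_of_nonneg hnn]
      have hrepn : Set.EqOn (fun t => ‖F (x, t)‖)
          ((Set.Ioc a x).indicator
            (fun t => ‖g x * ((1 / Real.Gamma (1 - α)) * ((x - t) ^ (-α) * deriv f t))‖))
          (Set.Ioc a b) := by
        intro t ht
        have := hFrep x ht
        simp only at this ⊢
        rw [this, Set.indicator_apply, Set.indicator_apply]
        split <;> simp
      calc ∫ t, ‖F (x, t)‖ ∂μ
          = ∫ t in Set.Ioc a x,
              ‖g x * ((1 / Real.Gamma (1 - α)) * ((x - t) ^ (-α) * deriv f t))‖ := by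
            rw [hμ, setIntegral_congr_fun measurableSet_Ioc hrepn,
              setIntegral_indicator measurableSet_Ioc,
              show Set.Ioc a b ∩ Set.Ioc a x = Set.Ioc a x by
                rw [Set.Ioc_inter_Ioc]; simp [min_eq_right hx'.2]]
        _ ≤ ∫ t in Set.Ioc a x,
              (N * ((1 / Real.Gamma (1 - α)) * M)) * (x - t) ^ (-α) := by
            refine setIntegral_mono_on ((hInner x hx').1.norm)
              (((hker x).const_mul _).1) measurableSet_Ioc ?_
            intro t ht
            have hk : (0:ℝ) ≤ (x - t) ^ (-α) :=
              Real.rpow_nonneg (by linarith [ht.2]) _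
            have e1 : ‖g x * ((1 / Real.Gamma (1 - α)) * ((x - t) ^ (-α) * deriv f t))‖
                = (‖g x‖ * (‖(1:ℝ) / Real.Gamma (1 - α)‖ * ‖deriv f t‖)) * (x - t) ^ (-α) := by
              simp only [norm_mul, Real.norm_eq_abs, abs_of_nonneg hk]; ring
            rw [e1]
            refine mul_le_mul_of_nonneg_right ?_ hk
            have hg1 : ‖g x‖ ≤ N := hN x hx'
            have hd1 : ‖deriv f t‖ ≤ M :=
              hM t ⟨le_of_lt ht.1, le_trans ht.2 hx'.2⟩
            have hc1 : ‖(1:ℝ) / Real.Gamma (1 - α)‖ = 1 / Real.Gamma (1 - α) :=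
              Real.norm_of_nonneg (by positivity)
            rw [hc1]
            gcongr
        _ = (N * ((1 / Real.Gamma (1 - α)) * M)) * ((x - a) ^ (1 - α) / (1 - α)) := by
            rw [← intervalIntegral.integral_of_le hx'.1,
              intervalIntegral.integral_const_mul, hkerval x]
        _ ≤ (N * ((1 / Real.Gamma (1 - α)) * M)) * ((b - a) ^ (1 - α) / (1 - α)) := by
            have hxa : (0:ℝ) ≤ x - a := by linarith [hx'.1]
            have hrle : (x - a) ^ (1 - α) ≤ (b - a) ^ (1 - α) :=
              Real.rpow_le_rpow hxa (by linarith [hx'.2]) hα0'.le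
            have hcoef : (0:ℝ) ≤ N * ((1 / Real.Gamma (1 - α)) * M) := by positivity
            have : (x - a) ^ (1 - α) / (1 - α) ≤ (b - a) ^ (1 - α) / (1 - α) := by
              gcongr
            exact mul_le_mul_of_nonneg_left this hcoef
  -- Fubini
  have step1 : ∫ x in a..b, g x * caputoLeft a α f x = ∫ t in a..b, deriv f t * G t := by
    rw [intervalIntegral.integral_of_le hab.le, intervalIntegral.integral_of_le hab.le]
    calc ∫ x in Set.Ioc a b, g x * caputoLeft a α f x
        = ∫ x, (∫ t, F (x, t) ∂μ) ∂μ := by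
          rw [hμ]
          exact (setIntegral_congr_fun measurableSet_Ioc
            (fun x hx => (hIntInner x (Set.Ioc_subset_Icc_self hx)))).symm
      _ = ∫ t, (∫ x, F (x, t) ∂μ) ∂μ := MeasureTheory.integral_integral_swap hFint
      _ = ∫ t in Set.Ioc a b, deriv f t * G t := by
          rw [hμ]
          exact setIntegral_congr_fun measurableSet_Ioc
            (fun t ht => hIntInner' t (Set.Ioc_subset_Icc_self ht))
  -- integration by parts
  have hGdiff : ∀ x ∈ Set.Icc a b, DifferentiableAt ℝ G x := fun x hx => hgD.1 x hx
  have hDerG : ∀ x ∈ Set.Icc a b, HasDerivAt G (-(rlRightDeriv b α g x)) x := by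
    intro x hx
    have h1 : rlRightDeriv b α g x = -deriv G x := rfl
    rw [h1, neg_neg]
    exact (hGdiff x hx).hasDerivAt
  have hIcc : Set.uIcc a b = Set.Icc a b := Set.uIcc_of_le hab.le
  have hGc : ContinuousOn G (Set.uIcc a b) := by
    rw [hIcc]
    exact fun x hx => ((hGdiff x hx).continuousAt).continuousWithinAt
  have hfc : ContinuousOn f (Set.uIcc a b) := by
    rw [hIcc]
    exact fun x hx => ((hf.1 x hx).continuousAt).continuousWithinAt
  have hu' : IntervalIntegrable (fun x => -(rlRightDeriv b α g x)) volume a b := by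
    apply ContinuousOn.intervalIntegrable
    rw [hIcc]
    exact hgD.2.neg
  have hv' : IntervalIntegrable (deriv f) volume a b := by
    apply ContinuousOn.intervalIntegrable
    rw [hIcc]
    exact hf.2
  have hIBP := intervalIntegral.integral_mul_deriv_eq_deriv_mul_of_hasDerivAt
    (u := G) (v := f) (u' := fun x => -(rlRightDeriv b α g x)) (v' := deriv f)
    hGc hfc
    (fun x hx => hDerG x (by
      rw [min_eq_left hab.le, max_eq_right hab.le] at hx
      exact ⟨hx.1.le, hx.2.le⟩))
    (fun x hx => (hf.1 x (by
      rw [min_eq_left hab.le, max_eq_right hab.le] at hx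
      exact ⟨hx.1.le, hx.2.le⟩)).hasDerivAt)
    hu' hv'
  have hGr : ∀ u, rlRightInt b (1 - α) g u = G u := by
    intro u
    simp only [rlRightInt, hGdef, sub_sub_cancel_left]
  rw [step1, hGr b, hGr a,
    intervalIntegral.integral_congr (g := fun x => G x * deriv f x)
      (fun x _ => mul_comm _ _),
    hIBP,
    show (∫ x in a..b, -(rlRightDeriv b α g x) * f x)
        = -∫ x in a..b, f x * rlRightDeriv b α g x by
      rw [← intervalIntegral.integral_neg]
      exact intervalIntegral.integral_congr (fun x _ => by ring)]
  ring
end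

section
/- Let 0<α<1 and a<b be reals. Let f:[a,b]→ℝ be continuously differentiable and let g:[a,b]→ℝ be continuous and such that the left Riemann–Liouville derivative D_{a+}^α g exists and is continuous on [a,b]. Then ∫_a^b g(x)·(^C D_{b−}^α f)(x) dx = ∫_a^b f(x)·(D_{a+}^α g)(x) dx − [(I_{a+}^{1−α} g)(x)·f(x)]_{x=a}^{x=b}, i.e. minus the boundary term (I_{a+}^{1−α} g)(b)·f(b) − (I_{a+}^{1−α} g)(a)·f(a). -/
open MeasureTheory Set

lemma ker_intInt {α : ℝ} (hα1 : α < 1) (x c d : ℝ) :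
    IntervalIntegrable (fun t => (t - x) ^ (-α)) volume c d := by
  have h := (intervalIntegral.intervalIntegrable_rpow' (a := c - x) (b := d - x) (r := -α)
    (by linarith)).comp_sub_right x
  simpa using h

lemma ker_integral {α : ℝ} (hα1 : α < 1) {x b : ℝ} :
    ∫ t in x..b, (t - x) ^ (-α) = (b - x) ^ (1 - α) / (1 - α) := by
  have h := intervalIntegral.integral_comp_sub_right (a := x) (b := b)
    (fun s => s ^ (-α)) x
  rw [h, sub_self, integral_rpow (Or.inl (by linarith))]
  rw [Real.zero_rpow (by linarith)]
  norm_num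
  ring_nf

lemma fubini_triangle {α a b : ℝ} (hα0 : 0 < α) (hα1 : α < 1) (hab : a ≤ b)
    (G F : ℝ → ℝ) (hG : Continuous G) (hF : Continuous F) :
    (∫ x in a..b, G x * ∫ t in x..b, (t - x) ^ (-α) * F t)
      = ∫ t in a..b, F t * ∫ x in a..t, (t - x) ^ (-α) * G x := by
  set μ : Measure ℝ := volume.restrict (Ioc a b) with hμ
  set K : ℝ × ℝ → ℝ :=
    ({q : ℝ × ℝ | q.1 ≤ q.2}).indicator
      (fun q => (q.2 - q.1) ^ (-α) * (G q.1 * F q.2)) with hK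
  -- bounds
  obtain ⟨C, hC⟩ := (isCompact_Icc (a := a) (b := b)).exists_bound_of_continuousOn
    hG.continuousOn
  obtain ⟨D, hD⟩ := (isCompact_Icc (a := a) (b := b)).exists_bound_of_continuousOn
    hF.continuousOn
  set C' := max C 0 with hC'
  set D' := max D 0 with hD'
  have hC'0 : 0 ≤ C' := le_max_right _ _
  have hD'0 : 0 ≤ D' := le_max_right _ _
  have hCb : ∀ x ∈ Icc a b, ‖G x‖ ≤ C' := fun x hx => (hC x hx).trans (le_max_left _ _)
  have hDb : ∀ x ∈ Icc a b, ‖F x‖ ≤ D' := fun x hx => (hD x hx).trans (le_max_left _ _)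
  -- measurability
  have hKsm : StronglyMeasurable K := by
    apply Measurable.stronglyMeasurable
    apply Measurable.indicator
    · have h1 : Measurable (fun q : ℝ × ℝ => (q.2 - q.1) ^ (-α)) := by measurability
      exact h1.mul ((hG.measurable.comp measurable_fst).mul (hF.measurable.comp measurable_snd))
    · exact measurableSet_le measurable_fst measurable_snd
  -- section description
  have hsec : ∀ x : ℝ, (fun t => K (x, t))
      = (Ici x).indicator (fun t => (t - x) ^ (-α) * (G x * F t)) := by
    intro x
    funext t
    simp only [hK, Set.indicator_apply, Set.mem_setOf_eq, Set.mem_Ici]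
  have hsec2 : ∀ t : ℝ, (fun x => K (x, t))
      = (Iic t).indicator (fun x => (t - x) ^ (-α) * (G x * F t)) := by
    intro t
    funext x
    simp only [hK, Set.indicator_apply, Set.mem_setOf_eq, Set.mem_Iic]
  -- sections are integrable
  have hsecInt : ∀ x ∈ Ioc a b, Integrable (fun t => K (x, t)) μ := by
    intro x hx
    rw [hsec x, hμ, integrable_indicator_iff measurableSet_Ici, IntegrableOn,
      Measure.restrict_restrict measurableSet_Ici]
    have hset : Ici x ∩ Ioc a b = Icc x b := by
      ext t
      simp only [mem_inter_iff, mem_Ici, mem_Ioc, mem_Icc]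
      constructor
      · rintro ⟨h1, _, h3⟩; exact ⟨h1, h3⟩
      · rintro ⟨h1, h2⟩; exact ⟨h1, lt_of_lt_of_le hx.1 h1, h2⟩
    rw [hset, ← IntegrableOn, integrableOn_Icc_iff_integrableOn_Ioc]
    have hker : IntegrableOn (fun t => (t - x) ^ (-α)) (Ioc x b) volume := by
      have := (ker_intInt hα1 x x b).1
      simpa using this
    have hbd : ∀ᵐ t ∂(volume.restrict (Ioc x b)), ‖G x * F t‖ ≤ C' * D' := by
      filter_upwards [ae_restrict_mem measurableSet_Ioc] with t ht
      have htI : t ∈ Icc a b := ⟨le_of_lt (lt_trans hx.1 ht.1), ht.2⟩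
      calc ‖G x * F t‖ = ‖G x‖ * ‖F t‖ := norm_mul _ _
        _ ≤ C' * D' := mul_le_mul (hCb x (⟨le_of_lt hx.1, hx.2⟩)) (hDb t htI)
            (norm_nonneg _) hC'0
    have hmain : Integrable (fun t => (G x * F t) * (t - x) ^ (-α))
        (volume.restrict (Ioc x b)) :=
      Integrable.bdd_mul hker
        ((continuous_const.mul hF).aestronglyMeasurable).restrict hbd
    exact hmain.congr (Filter.Eventually.of_forall fun t => mul_comm _ _)
  -- integrability on the product
  have hKint : Integrable K (μ.prod μ) := by
    rw [integrable_prod_iff (hKsm.aestronglyMeasurable)]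
    constructor
    · filter_upwards [ae_restrict_mem measurableSet_Ioc] with x hx
      exact hsecInt x hx
    · -- bounded by constant
      set B := C' * D' * ((b - a) ^ (1 - α) / (1 - α)) with hB
      have hmeas : AEStronglyMeasurable (fun x => ∫ t, ‖K (x, t)‖ ∂μ) μ :=
        (hKsm.aestronglyMeasurable.norm).integral_prod_right'
      have hconst : Integrable (fun _ : ℝ => B) μ := integrable_const B
      apply Integrable.mono' hconst hmeas
      filter_upwards [ae_restrict_mem measurableSet_Ioc] with x hx
      have hnn : 0 ≤ ∫ t, ‖K (x, t)‖ ∂μ :=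
        integral_nonneg fun t => norm_nonneg _
      rw [Real.norm_of_nonneg hnn]
      -- bound the inner integral
      have hkerInt : IntegrableOn (fun t => (Ici x).indicator
          (fun t => (t - x) ^ (-α)) t) (Ioc a b) volume := by
        rw [IntegrableOn, integrable_indicator_iff measurableSet_Ici,
          IntegrableOn, Measure.restrict_restrict measurableSet_Ici]
        have hset : Ici x ∩ Ioc a b = Icc x b := by
          ext t
          simp only [mem_inter_iff, mem_Ici, mem_Ioc, mem_Icc]
          constructor
          · rintro ⟨h1, _, h3⟩; exact ⟨h1, h3⟩
          · rintro ⟨h1, h2⟩; exact ⟨h1, lt_of_lt_of_le hx.1 h1, h2⟩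
        rw [hset, ← IntegrableOn, integrableOn_Icc_iff_integrableOn_Ioc]
        have := (ker_intInt hα1 x x b).1
        simpa using this
      have hb1 : (∫ t, ‖K (x, t)‖ ∂μ)
          ≤ ∫ t, C' * D' * (Ici x).indicator (fun t => (t - x) ^ (-α)) t ∂μ := by
        apply integral_mono_ae ((hsecInt x hx).norm)
          (hkerInt.const_mul (C' * D'))
        filter_upwards [ae_restrict_mem measurableSet_Ioc] with t ht
        have htI : t ∈ Icc a b := ⟨le_of_lt ht.1, ht.2⟩
        rw [congrFun (hsec x) t]
        simp only [Set.indicator_apply, mem_Ici]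
        by_cases hxt : x ≤ t
        · rw [if_pos hxt, if_pos hxt]
          have h0 : (0:ℝ) ≤ (t - x) ^ (-α) := Real.rpow_nonneg (by linarith) _
          calc ‖(t - x) ^ (-α) * (G x * F t)‖
              = (t - x) ^ (-α) * ‖G x * F t‖ := by
                rw [norm_mul, Real.norm_of_nonneg h0]
            _ ≤ (t - x) ^ (-α) * (C' * D') := by
                apply mul_le_mul_of_nonneg_left _ h0
                rw [norm_mul]
                exact mul_le_mul (hCb x ⟨le_of_lt hx.1, hx.2⟩) (hDb t htI)
                  (norm_nonneg _) hC'0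
            _ = C' * D' * (t - x) ^ (-α) := by ring
        · rw [if_neg hxt, if_neg hxt]
          simp
      refine hb1.trans ?_
      rw [integral_const_mul]
      have hset : Ioc a b ∩ Ici x = Icc x b := by
        ext t
        simp only [mem_inter_iff, mem_Ici, mem_Ioc, mem_Icc]
        constructor
        · rintro ⟨⟨_, h3⟩, h1⟩; exact ⟨h1, h3⟩
        · rintro ⟨h1, h2⟩; exact ⟨⟨lt_of_lt_of_le hx.1 h1, h2⟩, h1⟩
      rw [hμ, setIntegral_indicator measurableSet_Ici, hset,
        integral_Icc_eq_integral_Ioc, ← intervalIntegral.integral_of_le hx.2,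
        ker_integral hα1]
      apply mul_le_mul_of_nonneg_left _ (mul_nonneg hC'0 hD'0)
      apply div_le_div_of_nonneg_right ?_ (by linarith)
      exact Real.rpow_le_rpow (by linarith [hx.2]) (by linarith [hx.1]) (by linarith)
  have hswap := integral_integral_swap (μ := μ) (ν := μ)
      (f := fun x t => K (x, t)) hKint
  have hL : (∫ x in a..b, G x * ∫ t in x..b, (t - x) ^ (-α) * F t)
      = ∫ x, (∫ t, K (x, t) ∂μ) ∂μ := by
    rw [intervalIntegral.integral_of_le hab, hμ]
    apply setIntegral_congr_fun measurableSet_Ioc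
    intro x hx
    dsimp only
    have hsetx : Ioc a b ∩ Ici x = Icc x b := by
      ext t
      simp only [mem_inter_iff, mem_Ici, mem_Ioc, mem_Icc]
      constructor
      · rintro ⟨⟨_, h3⟩, h1⟩; exact ⟨h1, h3⟩
      · rintro ⟨h1, h2⟩; exact ⟨⟨lt_of_lt_of_le hx.1 h1, h2⟩, h1⟩
    rw [hsec x, setIntegral_indicator measurableSet_Ici, hsetx,
      integral_Icc_eq_integral_Ioc, ← intervalIntegral.integral_of_le hx.2,
      ← intervalIntegral.integral_const_mul]
    apply intervalIntegral.integral_congr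
    intro t _
    simp only
    ring
  have hR : (∫ t in a..b, F t * ∫ x in a..t, (t - x) ^ (-α) * G x)
      = ∫ t, (∫ x, K (x, t) ∂μ) ∂μ := by
    rw [intervalIntegral.integral_of_le hab, hμ]
    apply setIntegral_congr_fun measurableSet_Ioc
    intro t ht
    dsimp only
    have hsett : Ioc a b ∩ Iic t = Ioc a t := by
      ext x
      simp only [mem_inter_iff, mem_Iic, mem_Ioc]
      constructor
      · rintro ⟨⟨h1, _⟩, h3⟩; exact ⟨h1, h3⟩
      · rintro ⟨h1, h2⟩; exact ⟨⟨h1, le_trans h2 ht.2⟩, h2⟩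
    rw [hsec2 t, setIntegral_indicator measurableSet_Iic, hsett,
      ← intervalIntegral.integral_of_le (le_of_lt ht.1),
      ← intervalIntegral.integral_const_mul]
    apply intervalIntegral.integral_congr
    intro x _
    simp only
    ring
  rw [hL, hR]
  exact hswap

/-- Integration by parts for the right Caputo derivative:
`∫_a^b g·(^CD_{b−}^α f) = ∫_a^b f·(D_{a+}^α g) − [(I_{a+}^{1−α} g)·f]_a^b`. -/
theorem caputo_right_integration_by_parts
    (α a b : ℝ) (hα0 : 0 < α) (hα1 : α < 1) (hab : a < b)
    (f g : ℝ → ℝ) (hf : C1On f a b)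
    (hg : ContinuousOn g (Set.Icc a b))
    (hgD : HasContRlLeftDeriv a α g (Set.Icc a b)) :
    ∫ x in a..b, g x * caputoRight b α f x
      = (∫ x in a..b, f x * rlLeftDeriv a α g x)
        - (rlLeftInt a (1 - α) g b * f b - rlLeftInt a (1 - α) g a * f a) := by
  have hIcc : Set.uIcc a b = Set.Icc a b := Set.uIcc_of_le hab.le
  have hπcont : Continuous (fun x : ℝ => min b (max a x)) :=
    continuous_const.min (continuous_const.max continuous_id)
  have hπmem : ∀ x : ℝ, min b (max a x) ∈ Icc a b := fun x =>
    ⟨le_min hab.le (le_max_left a x), min_le_left _ _⟩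
  have hπid : ∀ x ∈ Icc a b, min b (max a x) = x := fun x hx => by
    rw [max_eq_right hx.1, min_eq_right hx.2]
  set gE : ℝ → ℝ := fun x => g (min b (max a x)) with hgEdef
  set fE' : ℝ → ℝ := fun x => deriv f (min b (max a x)) with hfE'def
  have hgE : Continuous gE := hg.comp_continuous hπcont hπmem
  have hfE' : Continuous fE' := hf.2.comp_continuous hπcont hπmem
  have hgEeq : ∀ x ∈ Icc a b, gE x = g x := fun x hx => by
    rw [hgEdef]; dsimp only; rw [hπid x hx]
  have hfE'eq : ∀ x ∈ Icc a b, fE' x = deriv f x := fun x hx => by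
    rw [hfE'def]; dsimp only; rw [hπid x hx]
  set c : ℝ := 1 / Real.Gamma (1 - α) with hcdef
  set Gfun : ℝ → ℝ :=
    fun u => (1 / Real.Gamma (1 - α)) * ∫ t in a..u, (u - t) ^ (-α) * g t with hGfundef
  have hGI : ∀ x, rlLeftInt a (1 - α) g x = Gfun x := fun x => by
    rw [rlLeftInt, hGfundef]
    dsimp only
    rw [show (1:ℝ) - α - 1 = -α by ring]
  have hGd : rlLeftDeriv a α g = deriv Gfun := rfl
  -- Step 1 : rewrite the LHS with the extended functions
  have hstep1 : (∫ x in a..b, g x * caputoRight b α f x)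
      = (-c) * ∫ x in a..b, gE x * ∫ t in x..b, (t - x) ^ (-α) * fE' t := by
    rw [← intervalIntegral.integral_const_mul]
    apply intervalIntegral.integral_congr
    intro x hx
    rw [hIcc] at hx
    have hinner : (∫ t in x..b, (t - x) ^ (-α) * fE' t)
        = ∫ t in x..b, (t - x) ^ (-α) * deriv f t := by
      apply intervalIntegral.integral_congr
      intro t ht
      rw [Set.uIcc_of_le hx.2] at ht
      dsimp only
      rw [hfE'eq t ⟨le_trans hx.1 ht.1, ht.2⟩]
    dsimp only
    rw [caputoRight, hinner, hgEeq x hx]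
    ring
  -- Step 2 : Fubini
  have hstep2 := fubini_triangle hα0 hα1 hab.le gE fE' hgE hfE'
  -- Step 3 : rewrite back
  have hstep3 : ((-c) * ∫ t in a..b, fE' t * ∫ x in a..t, (t - x) ^ (-α) * gE x)
      = -∫ t in a..b, deriv f t * Gfun t := by
    rw [← intervalIntegral.integral_neg, ← intervalIntegral.integral_const_mul]
    apply intervalIntegral.integral_congr
    intro t ht
    rw [hIcc] at ht
    have hin : (∫ x in a..t, (t - x) ^ (-α) * gE x)
        = ∫ x in a..t, (t - x) ^ (-α) * g x := by
      apply intervalIntegral.integral_congr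
      intro x hx
      rw [Set.uIcc_of_le ht.1] at hx
      dsimp only
      rw [hgEeq x ⟨hx.1, le_trans hx.2 ht.2⟩]
    dsimp only
    rw [hin, hfE'eq t ht, hGfundef]
    dsimp only
    rw [hcdef]
    ring
  -- Step 4 : integration by parts
  have hf_cont : ContinuousOn f (Set.Icc a b) := fun x hx =>
    (hf.1 x hx).continuousAt.continuousWithinAt
  have hG_cont : ContinuousOn Gfun (Set.Icc a b) := fun x hx =>
    (hgD.1 x hx).continuousAt.continuousWithinAt
  have hmin : min a b = a := min_eq_left hab.le
  have hmax : max a b = b := max_eq_right hab.le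
  have hparts := intervalIntegral.integral_mul_deriv_eq_deriv_mul_of_hasDerivAt
    (u := f) (v := Gfun) (u' := deriv f) (v' := rlLeftDeriv a α g) (a := a) (b := b)
    (by rw [hIcc]; exact hf_cont)
    (by rw [hIcc]; exact hG_cont)
    (fun x hx => by
      rw [hmin, hmax] at hx
      exact (hf.1 x (Set.Ioo_subset_Icc_self hx)).hasDerivAt)
    (fun x hx => by
      rw [hmin, hmax] at hx
      exact (hgD.1 x (Set.Ioo_subset_Icc_self hx)).hasDerivAt)
    (by
      apply ContinuousOn.intervalIntegrable
      rw [hIcc]; exact hf.2)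
    (by
      apply ContinuousOn.intervalIntegrable
      rw [hIcc]; exact hgD.2)
  rw [hstep1, hstep2, hstep3, hGI a, hGI b]
  have hb1 : (∫ x in a..b, f x * rlLeftDeriv a α g x)
      = f b * Gfun b - f a * Gfun a - ∫ x in a..b, deriv f x * Gfun x := hparts
  rw [hb1]
  ring
end

section
/- Let 0<α,β<1 and a<b be reals. Let L:[a,b]×ℝ³→ℝ be of class C¹ and convex in the sense that for all (x,y,u,v)∈[a,b]×ℝ³ and all (y₁,u₁,v₁)∈ℝ³: L(x,y+y₁,u+u₁,v+v₁) − L(x,y,u,v) ≥ ∂₂L(x,y,u,v)·y₁ + ∂₃L(x,y,u,v)·u₁ + ∂₄L(x,y,u,v)·v₁. Let y₀∈E be such that x ↦ ∂₃L[y₀](x) has a continuous right Riemann–Liouville derivative of order α, x ↦ ∂₄L[y₀](x) has a continuous left Riemann–Liouville derivative of order β, and y₀ satisfies the fractional Euler–Lagrange equation ∂₂L[y₀](x) + (D_{b−}^α (∂₃L[y₀]))(x) + (D_{a+}^β (∂₄L[y₀]))(x) = 0 for all x∈[a,b]. Then y₀ minimizes J(y)=∫_a^b L[y](x) dx over all y∈E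 with y(a)=y₀(a) and y(b)=y₀(b), i.e. J(y₀) ≤ J(y) for every such y. -/
open MeasureTheory Set

/-- Membership in the space `E`: the left Caputo derivative of order `α` and the right
Caputo derivative of order `β` of `y` exist and are continuous on `[a,b]`. -/
def MemE (a b α β : ℝ) (y : ℝ → ℝ) : Prop :=
  (∀ x ∈ Set.Icc a b, DifferentiableAt ℝ y x) ∧
  (∀ x ∈ Set.Icc a b,
    IntervalIntegrable (fun t => (x - t) ^ (-α) * deriv y t) MeasureTheory.volume a x) ∧
  (∀ x ∈ Set.Icc a b,
    IntervalIntegrable (fun t => (t - x) ^ (-β) * deriv y t) MeasureTheory.volume x b) ∧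
  ContinuousOn (caputoLeft a α y) (Set.Icc a b) ∧
  ContinuousOn (caputoRight b β y) (Set.Icc a b)

/-- Partial derivative of `L(x,y,u,v)` with respect to the 2nd variable. -/
noncomputable def d2 (L : ℝ → ℝ → ℝ → ℝ → ℝ) (x y u v : ℝ) : ℝ := deriv (fun z => L x z u v) y

/-- Partial derivative of `L(x,y,u,v)` with respect to the 3rd variable. -/
noncomputable def d3 (L : ℝ → ℝ → ℝ → ℝ → ℝ) (x y u v : ℝ) : ℝ := deriv (fun z => L x y z v) u

/-- Partial derivative of `L(x,y,u,v)` with respect to the 4th variable. -/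
noncomputable def d4 (L : ℝ → ℝ → ℝ → ℝ → ℝ) (x y u v : ℝ) : ℝ := deriv (fun z => L x y u z) v

/-- `L(x, y(x), (^CD_{a+}^α y)(x), (^CD_{b-}^β y)(x))`, i.e. `L[y](x)`. -/
noncomputable def lag (a b α β : ℝ) (L : ℝ → ℝ → ℝ → ℝ → ℝ) (y : ℝ → ℝ) (x : ℝ) : ℝ :=
  L x (y x) (caputoLeft a α y x) (caputoRight b β y x)

/-- `∂₂L[y](x)`. -/
noncomputable def d2lag (a b α β : ℝ) (L : ℝ → ℝ → ℝ → ℝ → ℝ) (y : ℝ → ℝ) (x : ℝ) : ℝ :=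
  d2 L x (y x) (caputoLeft a α y x) (caputoRight b β y x)

/-- `∂₃L[y](x)`. -/
noncomputable def d3lag (a b α β : ℝ) (L : ℝ → ℝ → ℝ → ℝ → ℝ) (y : ℝ → ℝ) (x : ℝ) : ℝ :=
  d3 L x (y x) (caputoLeft a α y x) (caputoRight b β y x)

/-- `∂₄L[y](x)`. -/
noncomputable def d4lag (a b α β : ℝ) (L : ℝ → ℝ → ℝ → ℝ → ℝ) (y : ℝ → ℝ) (x : ℝ) : ℝ :=
  d4 L x (y x) (caputoLeft a α y x) (caputoRight b β y x)

/-- `L` is of class `C¹` on `[a,b] × ℝ³`. -/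
def C1Lag (a b : ℝ) (L : ℝ → ℝ → ℝ → ℝ → ℝ) : Prop :=
  ContDiffOn ℝ 1 (fun p : ℝ × ℝ × ℝ × ℝ => L p.1 p.2.1 p.2.2.1 p.2.2.2)
    ((Set.Icc a b) ×ˢ (Set.univ : Set (ℝ × ℝ × ℝ)))

/-- The linear combination `l₀·L + l₁·g` of two Lagrangians. -/
noncomputable def combo (l0 l1 : ℝ) (L g : ℝ → ℝ → ℝ → ℝ → ℝ) : ℝ → ℝ → ℝ → ℝ → ℝ :=
  fun x y u v => l0 * L x y u v + l1 * g x y u v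


section AuxLemmas

open MeasureTheory Set intervalIntegral

lemma kernInt {γ : ℝ} (hγ : γ < 1) (t c d : ℝ) :
    IntervalIntegrable (fun x => (x - t) ^ (-γ)) MeasureTheory.volume c d := by
  simpa using
    (intervalIntegral.intervalIntegrable_rpow' (a := c - t) (b := d - t) (r := -γ)
      (by linarith)).comp_sub_right t

lemma ae_ne_vol (b : ℝ) : ∀ᵐ t : ℝ, t ≠ b := by
  rw [MeasureTheory.ae_iff]
  have : {t : ℝ | ¬ t ≠ b} = {b} := by ext t; simp
  rw [this]
  simp

lemma derivIntegrable {a b α β : ℝ} (hα0 : 0 < α) (hab : a ≤ b) {y : ℝ → ℝ}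
    (hy : MemE a b α β y) : MeasureTheory.IntegrableOn (deriv y) (Set.Icc a b) := by
  have H : IntervalIntegrable (fun t => (b - t) ^ (-α) * deriv y t) volume a b :=
    hy.2.1 b ⟨hab, le_refl b⟩
  have hcont : ContinuousOn (fun t : ℝ => (b - t) ^ α) (Set.uIcc a b) :=
    ((Real.continuous_rpow_const hα0.le).comp (continuous_const.sub continuous_id)).continuousOn
  have K := H.mul_continuousOn hcont
  rw [intervalIntegrable_iff_integrableOn_Ioc_of_le hab] at K
  rw [integrableOn_Icc_iff_integrableOn_Ioc]
  refine K.congr ?_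
  filter_upwards [MeasureTheory.ae_restrict_mem measurableSet_Ioc,
    MeasureTheory.ae_restrict_of_ae (ae_ne_vol b)] with t ht hne
  have hbt : 0 < b - t := by
    rcases lt_or_eq_of_le ht.2 with h | h
    · linarith
    · exact absurd h hne
  have h1 : (b - t) ^ (-α) * (b - t) ^ α = 1 := by
    rw [← Real.rpow_add hbt]; simp
  calc (b - t) ^ (-α) * deriv y t * (b - t) ^ α
      = ((b - t) ^ (-α) * (b - t) ^ α) * deriv y t := by ring
    _ = deriv y t := by rw [h1, one_mul]

end AuxLemmas
section Fubini

open MeasureTheory Set intervalIntegral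

lemma kint_bound {γ : ℝ} (hγ1 : γ < 1) {a b t : ℝ} (ht : t ∈ Set.Icc a b) :
    (∫ x in t..b, (x - t) ^ (-γ)) ≤ (b - a) ^ (1 - γ) / (1 - γ) := by
  have h1 : (0:ℝ) < 1 - γ := by linarith
  have heq : (∫ x in t..b, (x - t) ^ (-γ)) = (b - t) ^ (1 - γ) / (1 - γ) := by
    have h2 := intervalIntegral.integral_comp_sub_right (a := t) (b := b)
      (fun x => x ^ (-γ)) t
    rw [h2, integral_rpow (Or.inl (by linarith)), sub_self,
      Real.zero_rpow (by linarith : (0:ℝ) < -γ + 1).ne']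
    norm_num
    ring_nf
  rw [heq]
  gcongr
  · exact sub_nonneg.mpr ht.2
  · linarith [ht.1]

end Fubini
section FubiniMain

open MeasureTheory Set intervalIntegral

lemma fubini_left {γ a b : ℝ} (hγ0 : 0 < γ) (hγ1 : γ < 1) (hab : a ≤ b)
    (w v : ℝ → ℝ) (hw : Measurable w) (hwi : MeasureTheory.IntegrableOn w (Set.Icc a b))
    (hv : ContinuousOn v (Set.Icc a b)) :
    (∫ x in a..b, v x * ∫ t in a..x, (x - t) ^ (-γ) * w t) =
      ∫ t in a..b, w t * ∫ x in t..b, (x - t) ^ (-γ) * v x := by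
  obtain ⟨C, hC⟩ := isCompact_Icc.exists_bound_of_continuousOn hv
  set μ := volume.restrict (Set.Icc a b) with hμ
  set T : Set (ℝ × ℝ) := {q : ℝ × ℝ | q.1 ≤ q.2} with hT
  have hTm : MeasurableSet T := measurableSet_le measurable_fst measurable_snd
  set f : ℝ × ℝ → ℝ := fun q => (q.2 - q.1) ^ (-γ) * w q.1 * v q.2 with hf
  set K : ℝ × ℝ → ℝ := T.indicator f with hK
  -- measurability
  have hprod : μ.prod μ = (volume.prod volume).restrict (Set.Icc a b ×ˢ Set.Icc a b) :=
    Measure.prod_restrict _ _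
  have hva : AEStronglyMeasurable (fun q : ℝ × ℝ => v q.2) (μ.prod μ) := by
    rw [hprod]
    exact (hv.comp continuous_snd.continuousOn (fun q hq => hq.2)).aestronglyMeasurable
      (measurableSet_Icc.prod measurableSet_Icc)
  have hker : Measurable fun q : ℝ × ℝ => (q.2 - q.1) ^ (-γ) := by fun_prop
  have hfm : AEStronglyMeasurable f (μ.prod μ) :=
    (hker.aestronglyMeasurable.mul (hw.comp measurable_fst).aestronglyMeasurable).mul hva
  have hKm : AEStronglyMeasurable K (μ.prod μ) := hfm.indicator hTm
  -- slice integrability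
  have slice : ∀ t : ℝ, MeasureTheory.IntegrableOn
      (fun x => (x - t) ^ (-γ) * w t * v x) (Set.Icc a b) volume := by
    intro t
    have h1 : IntervalIntegrable (fun x => (x - t) ^ (-γ) * w t * v x) volume a b :=
      ((kernInt hγ1 t a b).mul_const (w t)).mul_continuousOn (by rwa [Set.uIcc_of_le hab])
    rw [integrableOn_Icc_iff_integrableOn_Ioc]
    exact (intervalIntegrable_iff_integrableOn_Ioc_of_le hab).mp h1
  have hsliceK : ∀ t : ℝ, (fun x => K (t, x)) =
      (Set.Ici t).indicator (fun x => (x - t) ^ (-γ) * w t * v x) := by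
    intro t
    funext x
    simp only [hK, hT, hf, Set.indicator_apply, Set.mem_setOf_eq, Set.mem_Ici]
  have hKslice : ∀ t : ℝ, Integrable (fun x => K (t, x)) μ := by
    intro t
    rw [hsliceK t, MeasureTheory.integrable_indicator_iff measurableSet_Ici]
    rw [MeasureTheory.IntegrableOn, hμ, Measure.restrict_restrict measurableSet_Ici]
    exact (slice t).mono_set Set.inter_subset_right
  -- bound on the norm integrals
  have bound : ∀ t ∈ Set.Icc a b,
      (∫ x, ‖K (t, x)‖ ∂μ) ≤ (C * ((b - a) ^ (1 - γ) / (1 - γ))) * |w t| := by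
    intro t ht
    have hkerInt : MeasureTheory.IntegrableOn
        (fun x => (x - t) ^ (-γ) * (C * |w t|)) (Set.Icc a b) volume := by
      rw [integrableOn_Icc_iff_integrableOn_Ioc]
      exact (intervalIntegrable_iff_integrableOn_Ioc_of_le hab).mp
        ((kernInt hγ1 t a b).mul_const _)
    have hindInt : Integrable
        (fun x => (Set.Ici t).indicator (fun x => (x - t) ^ (-γ)) x * (C * |w t|)) μ := by
      have : (fun x => (Set.Ici t).indicator (fun x => (x - t) ^ (-γ)) x * (C * |w t|)) =
          (Set.Ici t).indicator (fun x => (x - t) ^ (-γ) * (C * |w t|)) := by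
        funext x; by_cases h : x ∈ Set.Ici t <;> simp [h]
      rw [this, MeasureTheory.integrable_indicator_iff measurableSet_Ici,
        MeasureTheory.IntegrableOn, hμ, Measure.restrict_restrict measurableSet_Ici]
      exact hkerInt.mono_set Set.inter_subset_right
    have hpt : ∀ x ∈ Set.Icc a b, ‖K (t, x)‖ ≤
        (Set.Ici t).indicator (fun x => (x - t) ^ (-γ)) x * (C * |w t|) := by
      intro x hx
      by_cases hc : t ≤ x
      · have h0 : (0:ℝ) ≤ (x - t) ^ (-γ) := Real.rpow_nonneg (by linarith) _
        have hmem : ((t, x) : ℝ × ℝ) ∈ T := hc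
        rw [hK, Set.indicator_of_mem hmem, Set.indicator_of_mem (Set.mem_Ici.mpr hc)]
        have hvx : |v x| ≤ C := by rw [← Real.norm_eq_abs]; exact hC x hx
        calc ‖f (t, x)‖ = (x - t) ^ (-γ) * |w t| * |v x| := by
              rw [hf]; simp only [Real.norm_eq_abs, abs_mul, abs_of_nonneg h0]
          _ ≤ (x - t) ^ (-γ) * |w t| * C := by
              apply mul_le_mul_of_nonneg_left hvx (by positivity)
          _ = (x - t) ^ (-γ) * (C * |w t|) := by ring
      · have hmem : ((t, x) : ℝ × ℝ) ∉ T := hc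
        rw [hK, Set.indicator_of_notMem hmem, Set.indicator_of_notMem (by simpa using hc)]
        simp
    calc ∫ x, ‖K (t, x)‖ ∂μ
        ≤ ∫ x, (Set.Ici t).indicator (fun x => (x - t) ^ (-γ)) x * (C * |w t|) ∂μ := by
          exact setIntegral_mono_on (hKslice t).norm hindInt measurableSet_Icc hpt
      _ = (∫ x, (Set.Ici t).indicator (fun x => (x - t) ^ (-γ)) x ∂μ) * (C * |w t|) := by
          exact integral_mul_const _ _
      _ ≤ ((b - a) ^ (1 - γ) / (1 - γ)) * (C * |w t|) := by
          have hC0 : 0 ≤ C := le_trans (norm_nonneg (v a)) (hC a ⟨le_refl a, hab⟩)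
          apply mul_le_mul_of_nonneg_right ?_ (mul_nonneg hC0 (abs_nonneg _))
          rw [MeasureTheory.integral_indicator measurableSet_Ici, hμ,
            Measure.restrict_restrict measurableSet_Ici]
          have hset : Set.Ici t ∩ Set.Icc a b = Set.Icc t b := by
            ext u
            simp only [Set.mem_inter_iff, Set.mem_Ici, Set.mem_Icc]
            exact ⟨fun ⟨h1, _, h3⟩ => ⟨h1, h3⟩, fun ⟨h1, h2⟩ => ⟨h1, ht.1.trans h1, h2⟩⟩
          rw [hset, MeasureTheory.integral_Icc_eq_integral_Ioc,
            ← intervalIntegral.integral_of_le ht.2]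
          exact kint_bound hγ1 ht
      _ = (C * ((b - a) ^ (1 - γ) / (1 - γ))) * |w t| := by ring
  -- integrability on the product
  have hKint : Integrable K (μ.prod μ) := by
    rw [MeasureTheory.integrable_prod_iff hKm]
    refine ⟨Filter.Eventually.of_forall hKslice, ?_⟩
    apply MeasureTheory.Integrable.mono'
      (g := fun t => (C * ((b - a) ^ (1 - γ) / (1 - γ))) * |w t|)
    · exact hwi.abs.const_mul _
    · exact hKm.norm.integral_prod_right'
    · filter_upwards [MeasureTheory.ae_restrict_mem measurableSet_Icc] with t ht
      have h0 : (0:ℝ) ≤ ∫ x, ‖K (t, x)‖ ∂μ := integral_nonneg fun x => norm_nonneg _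
      rw [Real.norm_eq_abs, abs_of_nonneg h0]
      exact bound t ht
  -- swap
  have swap : (∫ t, ∫ x, K (t, x) ∂μ ∂μ) = ∫ x, ∫ t, K (t, x) ∂μ ∂μ := by
    apply MeasureTheory.integral_integral_swap
    exact hKint
  -- identify both sides
  have lhs_eq : (∫ x in a..b, v x * ∫ t in a..x, (x - t) ^ (-γ) * w t) =
      ∫ x, (∫ t, K (t, x) ∂μ) ∂μ := by
    rw [intervalIntegral.integral_of_le hab, ← MeasureTheory.integral_Icc_eq_integral_Ioc]
    apply setIntegral_congr_fun measurableSet_Icc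
    intro x hx
    dsimp only
    have hfun : (fun t => K (t, x)) =
        (Set.Iic x).indicator (fun t => (x - t) ^ (-γ) * w t * v x) := by
      funext t
      simp only [hK, hT, hf, Set.indicator_apply, Set.mem_setOf_eq, Set.mem_Iic]
    rw [hfun, MeasureTheory.integral_indicator measurableSet_Iic, hμ,
      Measure.restrict_restrict measurableSet_Iic]
    have hset : Set.Iic x ∩ Set.Icc a b = Set.Icc a x := by
      ext u
      simp only [Set.mem_inter_iff, Set.mem_Iic, Set.mem_Icc]
      exact ⟨fun ⟨h1, h2, _⟩ => ⟨h2, h1⟩, fun ⟨h1, h2⟩ => ⟨h2, h1, h2.trans hx.2⟩⟩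
    rw [hset, MeasureTheory.integral_Icc_eq_integral_Ioc,
      ← intervalIntegral.integral_of_le hx.1, intervalIntegral.integral_mul_const, mul_comm]
  have rhs_eq : (∫ t in a..b, w t * ∫ x in t..b, (x - t) ^ (-γ) * v x) =
      ∫ t, (∫ x, K (t, x) ∂μ) ∂μ := by
    rw [intervalIntegral.integral_of_le hab, ← MeasureTheory.integral_Icc_eq_integral_Ioc]
    apply setIntegral_congr_fun measurableSet_Icc
    intro t ht
    dsimp only
    rw [hsliceK t, MeasureTheory.integral_indicator measurableSet_Ici, hμ,
      Measure.restrict_restrict measurableSet_Ici]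
    have hset : Set.Ici t ∩ Set.Icc a b = Set.Icc t b := by
      ext u
      simp only [Set.mem_inter_iff, Set.mem_Ici, Set.mem_Icc]
      exact ⟨fun ⟨h1, _, h3⟩ => ⟨h1, h3⟩, fun ⟨h1, h2⟩ => ⟨h1, ht.1.trans h1, h2⟩⟩
    rw [hset, MeasureTheory.integral_Icc_eq_integral_Ioc,
      ← intervalIntegral.integral_of_le ht.2, ← intervalIntegral.integral_const_mul]
    apply intervalIntegral.integral_congr
    intro u hu
    ring
  rw [lhs_eq, rhs_eq, swap]

end FubiniMain
section FubiniMain2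

open MeasureTheory Set intervalIntegral

lemma kernInt2 {γ : ℝ} (hγ : γ < 1) (t c d : ℝ) :
    IntervalIntegrable (fun x => (t - x) ^ (-γ)) MeasureTheory.volume c d := by
  have h := (intervalIntegral.intervalIntegrable_rpow' (a := t - c) (b := t - d) (r := -γ)
      (by linarith)).comp_sub_left t
  simpa using h

lemma kint_bound2 {γ : ℝ} (hγ1 : γ < 1) {a b t : ℝ} (ht : t ∈ Set.Icc a b) :
    (∫ x in a..t, (t - x) ^ (-γ)) ≤ (b - a) ^ (1 - γ) / (1 - γ) := by
  have h1 : (0:ℝ) < 1 - γ := by linarith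
  have heq : (∫ x in a..t, (t - x) ^ (-γ)) = (t - a) ^ (1 - γ) / (1 - γ) := by
    have h2 := intervalIntegral.integral_comp_sub_left (a := a) (b := t)
      (fun x => x ^ (-γ)) t
    rw [h2, sub_self, integral_rpow (Or.inl (by linarith)),
      Real.zero_rpow (by linarith : (0:ℝ) < -γ + 1).ne']
    norm_num
    ring_nf
  rw [heq]
  gcongr
  · exact sub_nonneg.mpr ht.1
  · linarith [ht.2]

lemma fubini_right {γ a b : ℝ} (hγ0 : 0 < γ) (hγ1 : γ < 1) (hab : a ≤ b)
    (w v : ℝ → ℝ) (hw : Measurable w) (hwi : MeasureTheory.IntegrableOn w (Set.Icc a b))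
    (hv : ContinuousOn v (Set.Icc a b)) :
    (∫ x in a..b, v x * ∫ t in x..b, (t - x) ^ (-γ) * w t) =
      ∫ t in a..b, w t * ∫ x in a..t, (t - x) ^ (-γ) * v x := by
  obtain ⟨C, hC⟩ := isCompact_Icc.exists_bound_of_continuousOn hv
  set μ := volume.restrict (Set.Icc a b) with hμ
  set T : Set (ℝ × ℝ) := {q : ℝ × ℝ | q.2 ≤ q.1} with hT
  have hTm : MeasurableSet T := measurableSet_le measurable_snd measurable_fst
  set f : ℝ × ℝ → ℝ := fun q => (q.1 - q.2) ^ (-γ) * w q.1 * v q.2 with hf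
  set K : ℝ × ℝ → ℝ := T.indicator f with hK
  have hprod : μ.prod μ = (volume.prod volume).restrict (Set.Icc a b ×ˢ Set.Icc a b) :=
    Measure.prod_restrict _ _
  have hva : AEStronglyMeasurable (fun q : ℝ × ℝ => v q.2) (μ.prod μ) := by
    rw [hprod]
    exact (hv.comp continuous_snd.continuousOn (fun q hq => hq.2)).aestronglyMeasurable
      (measurableSet_Icc.prod measurableSet_Icc)
  have hker : Measurable fun q : ℝ × ℝ => (q.1 - q.2) ^ (-γ) := by fun_prop
  have hfm : AEStronglyMeasurable f (μ.prod μ) :=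
    (hker.aestronglyMeasurable.mul (hw.comp measurable_fst).aestronglyMeasurable).mul hva
  have hKm : AEStronglyMeasurable K (μ.prod μ) := hfm.indicator hTm
  have slice : ∀ t : ℝ, MeasureTheory.IntegrableOn
      (fun x => (t - x) ^ (-γ) * w t * v x) (Set.Icc a b) volume := by
    intro t
    have h1 : IntervalIntegrable (fun x => (t - x) ^ (-γ) * w t * v x) volume a b :=
      ((kernInt2 hγ1 t a b).mul_const (w t)).mul_continuousOn (by rwa [Set.uIcc_of_le hab])
    rw [integrableOn_Icc_iff_integrableOn_Ioc]
    exact (intervalIntegrable_iff_integrableOn_Ioc_of_le hab).mp h1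
  have hsliceK : ∀ t : ℝ, (fun x => K (t, x)) =
      (Set.Iic t).indicator (fun x => (t - x) ^ (-γ) * w t * v x) := by
    intro t
    funext x
    simp only [hK, hT, hf, Set.indicator_apply, Set.mem_setOf_eq, Set.mem_Iic]
  have hKslice : ∀ t : ℝ, Integrable (fun x => K (t, x)) μ := by
    intro t
    rw [hsliceK t, MeasureTheory.integrable_indicator_iff measurableSet_Iic]
    rw [MeasureTheory.IntegrableOn, hμ, Measure.restrict_restrict measurableSet_Iic]
    exact (slice t).mono_set Set.inter_subset_right
  have bound : ∀ t ∈ Set.Icc a b,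
      (∫ x, ‖K (t, x)‖ ∂μ) ≤ (C * ((b - a) ^ (1 - γ) / (1 - γ))) * |w t| := by
    intro t ht
    have hkerInt : MeasureTheory.IntegrableOn
        (fun x => (t - x) ^ (-γ) * (C * |w t|)) (Set.Icc a b) volume := by
      rw [integrableOn_Icc_iff_integrableOn_Ioc]
      exact (intervalIntegrable_iff_integrableOn_Ioc_of_le hab).mp
        ((kernInt2 hγ1 t a b).mul_const _)
    have hindInt : Integrable
        (fun x => (Set.Iic t).indicator (fun x => (t - x) ^ (-γ)) x * (C * |w t|)) μ := by
      have : (fun x => (Set.Iic t).indicator (fun x => (t - x) ^ (-γ)) x * (C * |w t|)) =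
          (Set.Iic t).indicator (fun x => (t - x) ^ (-γ) * (C * |w t|)) := by
        funext x; by_cases h : x ∈ Set.Iic t <;> simp [h]
      rw [this, MeasureTheory.integrable_indicator_iff measurableSet_Iic,
        MeasureTheory.IntegrableOn, hμ, Measure.restrict_restrict measurableSet_Iic]
      exact hkerInt.mono_set Set.inter_subset_right
    have hpt : ∀ x ∈ Set.Icc a b, ‖K (t, x)‖ ≤
        (Set.Iic t).indicator (fun x => (t - x) ^ (-γ)) x * (C * |w t|) := by
      intro x hx
      by_cases hc : x ≤ t
      · have h0 : (0:ℝ) ≤ (t - x) ^ (-γ) := Real.rpow_nonneg (by linarith) _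
        have hmem : ((t, x) : ℝ × ℝ) ∈ T := hc
        rw [hK, Set.indicator_of_mem hmem, Set.indicator_of_mem (Set.mem_Iic.mpr hc)]
        have hvx : |v x| ≤ C := by rw [← Real.norm_eq_abs]; exact hC x hx
        calc ‖f (t, x)‖ = (t - x) ^ (-γ) * |w t| * |v x| := by
              rw [hf]; simp only [Real.norm_eq_abs, abs_mul, abs_of_nonneg h0]
          _ ≤ (t - x) ^ (-γ) * |w t| * C := by
              apply mul_le_mul_of_nonneg_left hvx (by positivity)
          _ = (t - x) ^ (-γ) * (C * |w t|) := by ring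
      · have hmem : ((t, x) : ℝ × ℝ) ∉ T := hc
        rw [hK, Set.indicator_of_notMem hmem, Set.indicator_of_notMem (by simpa using hc)]
        simp
    calc ∫ x, ‖K (t, x)‖ ∂μ
        ≤ ∫ x, (Set.Iic t).indicator (fun x => (t - x) ^ (-γ)) x * (C * |w t|) ∂μ := by
          exact setIntegral_mono_on (hKslice t).norm hindInt measurableSet_Icc hpt
      _ = (∫ x, (Set.Iic t).indicator (fun x => (t - x) ^ (-γ)) x ∂μ) * (C * |w t|) := by
          exact integral_mul_const _ _
      _ ≤ ((b - a) ^ (1 - γ) / (1 - γ)) * (C * |w t|) := by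
          have hC0 : 0 ≤ C := le_trans (norm_nonneg (v a)) (hC a ⟨le_refl a, hab⟩)
          apply mul_le_mul_of_nonneg_right ?_ (mul_nonneg hC0 (abs_nonneg _))
          rw [MeasureTheory.integral_indicator measurableSet_Iic, hμ,
            Measure.restrict_restrict measurableSet_Iic]
          have hset : Set.Iic t ∩ Set.Icc a b = Set.Icc a t := by
            ext u
            simp only [Set.mem_inter_iff, Set.mem_Iic, Set.mem_Icc]
            exact ⟨fun ⟨h1, h2, _⟩ => ⟨h2, h1⟩, fun ⟨h1, h2⟩ => ⟨h2, h1, h2.trans ht.2⟩⟩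
          rw [hset, MeasureTheory.integral_Icc_eq_integral_Ioc,
            ← intervalIntegral.integral_of_le ht.1]
          exact kint_bound2 hγ1 ht
      _ = (C * ((b - a) ^ (1 - γ) / (1 - γ))) * |w t| := by ring
  have hKint : Integrable K (μ.prod μ) := by
    rw [MeasureTheory.integrable_prod_iff hKm]
    refine ⟨Filter.Eventually.of_forall hKslice, ?_⟩
    apply MeasureTheory.Integrable.mono'
      (g := fun t => (C * ((b - a) ^ (1 - γ) / (1 - γ))) * |w t|)
    · exact hwi.abs.const_mul _
    · exact hKm.norm.integral_prod_right'
    · filter_upwards [MeasureTheory.ae_restrict_mem measurableSet_Icc] with t ht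
      have h0 : (0:ℝ) ≤ ∫ x, ‖K (t, x)‖ ∂μ := integral_nonneg fun x => norm_nonneg _
      rw [Real.norm_eq_abs, abs_of_nonneg h0]
      exact bound t ht
  have swap : (∫ t, ∫ x, K (t, x) ∂μ ∂μ) = ∫ x, ∫ t, K (t, x) ∂μ ∂μ := by
    apply MeasureTheory.integral_integral_swap
    exact hKint
  have lhs_eq : (∫ x in a..b, v x * ∫ t in x..b, (t - x) ^ (-γ) * w t) =
      ∫ x, (∫ t, K (t, x) ∂μ) ∂μ := by
    rw [intervalIntegral.integral_of_le hab, ← MeasureTheory.integral_Icc_eq_integral_Ioc]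
    apply setIntegral_congr_fun measurableSet_Icc
    intro x hx
    dsimp only
    have hfun : (fun t => K (t, x)) =
        (Set.Ici x).indicator (fun t => (t - x) ^ (-γ) * w t * v x) := by
      funext t
      simp only [hK, hT, hf, Set.indicator_apply, Set.mem_setOf_eq, Set.mem_Ici]
    rw [hfun, MeasureTheory.integral_indicator measurableSet_Ici, hμ,
      Measure.restrict_restrict measurableSet_Ici]
    have hset : Set.Ici x ∩ Set.Icc a b = Set.Icc x b := by
      ext u
      simp only [Set.mem_inter_iff, Set.mem_Ici, Set.mem_Icc]
      exact ⟨fun ⟨h1, _, h3⟩ => ⟨h1, h3⟩, fun ⟨h1, h2⟩ => ⟨h1, hx.1.trans h1, h2⟩⟩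
    rw [hset, MeasureTheory.integral_Icc_eq_integral_Ioc,
      ← intervalIntegral.integral_of_le hx.2, intervalIntegral.integral_mul_const, mul_comm]
  have rhs_eq : (∫ t in a..b, w t * ∫ x in a..t, (t - x) ^ (-γ) * v x) =
      ∫ t, (∫ x, K (t, x) ∂μ) ∂μ := by
    rw [intervalIntegral.integral_of_le hab, ← MeasureTheory.integral_Icc_eq_integral_Ioc]
    apply setIntegral_congr_fun measurableSet_Icc
    intro t ht
    dsimp only
    rw [hsliceK t, MeasureTheory.integral_indicator measurableSet_Iic, hμ,
      Measure.restrict_restrict measurableSet_Iic]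
    have hset : Set.Iic t ∩ Set.Icc a b = Set.Icc a t := by
      ext u
      simp only [Set.mem_inter_iff, Set.mem_Iic, Set.mem_Icc]
      exact ⟨fun ⟨h1, h2, _⟩ => ⟨h2, h1⟩, fun ⟨h1, h2⟩ => ⟨h2, h1, h2.trans ht.2⟩⟩
    rw [hset, MeasureTheory.integral_Icc_eq_integral_Ioc,
      ← intervalIntegral.integral_of_le ht.1, ← intervalIntegral.integral_const_mul]
    apply intervalIntegral.integral_congr
    intro u hu
    ring
  rw [lhs_eq, rhs_eq, swap]

end FubiniMain2
section PartialDerivs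

open MeasureTheory Set

variable {a b : ℝ} {L : ℝ → ℝ → ℝ → ℝ → ℝ}

private lemma mem_sSet {x : ℝ} (hx : x ∈ Set.Icc a b) (y u v : ℝ) :
    ((x, y, u, v) : ℝ × ℝ × ℝ × ℝ) ∈ (Set.Icc a b) ×ˢ (Set.univ : Set (ℝ × ℝ × ℝ)) :=
  ⟨hx, trivial⟩

private lemma d2_eq_fderivWithin (hL : C1Lag a b L) {x : ℝ} (hx : x ∈ Set.Icc a b)
    (y u v : ℝ) :
    d2 L x y u v = fderivWithin ℝ (fun p : ℝ × ℝ × ℝ × ℝ => L p.1 p.2.1 p.2.2.1 p.2.2.2)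
      ((Set.Icc a b) ×ˢ (Set.univ : Set (ℝ × ℝ × ℝ))) (x, y, u, v) (0, 1, 0, 0) := by
  have hd := ((hL.differentiableOn one_ne_zero) _ (mem_sSet hx y u v)).hasFDerivWithinAt
  have hγ : HasDerivAt (fun z : ℝ => ((x, z, u, v) : ℝ × ℝ × ℝ × ℝ)) (0, 1, 0, 0) y :=
    HasDerivAt.prodMk (hasDerivAt_const _ _) (HasDerivAt.prodMk (hasDerivAt_id _)
      (HasDerivAt.prodMk (hasDerivAt_const _ _) (hasDerivAt_const _ _)))
  have hcomp := hd.comp_hasDerivWithinAt (x := y)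
    (hγ.hasDerivWithinAt (s := Set.univ)) (fun z _ => mem_sSet hx z u v)
  rw [hasDerivWithinAt_univ] at hcomp
  have h := hcomp.deriv
  simp only [Function.comp_def] at h
  show deriv (fun z => L x z u v) y = _
  exact h

private lemma d3_eq_fderivWithin (hL : C1Lag a b L) {x : ℝ} (hx : x ∈ Set.Icc a b)
    (y u v : ℝ) :
    d3 L x y u v = fderivWithin ℝ (fun p : ℝ × ℝ × ℝ × ℝ => L p.1 p.2.1 p.2.2.1 p.2.2.2)
      ((Set.Icc a b) ×ˢ (Set.univ : Set (ℝ × ℝ × ℝ))) (x, y, u, v) (0, 0, 1, 0) := by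
  have hd := ((hL.differentiableOn one_ne_zero) _ (mem_sSet hx y u v)).hasFDerivWithinAt
  have hγ : HasDerivAt (fun z : ℝ => ((x, y, z, v) : ℝ × ℝ × ℝ × ℝ)) (0, 0, 1, 0) u :=
    HasDerivAt.prodMk (hasDerivAt_const _ _) (HasDerivAt.prodMk (hasDerivAt_const _ _)
      (HasDerivAt.prodMk (hasDerivAt_id _) (hasDerivAt_const _ _)))
  have hcomp := hd.comp_hasDerivWithinAt (x := u)
    (hγ.hasDerivWithinAt (s := Set.univ)) (fun z _ => mem_sSet hx y z v)
  rw [hasDerivWithinAt_univ] at hcomp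
  have h := hcomp.deriv
  simp only [Function.comp_def] at h
  show deriv (fun z => L x y z v) u = _
  exact h

private lemma d4_eq_fderivWithin (hL : C1Lag a b L) {x : ℝ} (hx : x ∈ Set.Icc a b)
    (y u v : ℝ) :
    d4 L x y u v = fderivWithin ℝ (fun p : ℝ × ℝ × ℝ × ℝ => L p.1 p.2.1 p.2.2.1 p.2.2.2)
      ((Set.Icc a b) ×ˢ (Set.univ : Set (ℝ × ℝ × ℝ))) (x, y, u, v) (0, 0, 0, 1) := by
  have hd := ((hL.differentiableOn one_ne_zero) _ (mem_sSet hx y u v)).hasFDerivWithinAt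
  have hγ : HasDerivAt (fun z : ℝ => ((x, y, u, z) : ℝ × ℝ × ℝ × ℝ)) (0, 0, 0, 1) v :=
    HasDerivAt.prodMk (hasDerivAt_const _ _) (HasDerivAt.prodMk (hasDerivAt_const _ _)
      (HasDerivAt.prodMk (hasDerivAt_const _ _) (hasDerivAt_id _)))
  have hcomp := hd.comp_hasDerivWithinAt (x := v)
    (hγ.hasDerivWithinAt (s := Set.univ)) (fun z _ => mem_sSet hx y u z)
  rw [hasDerivWithinAt_univ] at hcomp
  have h := hcomp.deriv
  simp only [Function.comp_def] at h
  show deriv (fun z => L x y u z) v = _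
  exact h

private lemma contOn_curve {α β : ℝ} {y : ℝ → ℝ}
    (hyd : ∀ x ∈ Set.Icc a b, DifferentiableAt ℝ y x)
    (hcl : ContinuousOn (caputoLeft a α y) (Set.Icc a b))
    (hcr : ContinuousOn (caputoRight b β y) (Set.Icc a b)) :
    ContinuousOn (fun x => ((x, y x, caputoLeft a α y x, caputoRight b β y x) :
      ℝ × ℝ × ℝ × ℝ)) (Set.Icc a b) := by
  have hy : ContinuousOn y (Set.Icc a b) :=
    fun x hx => (hyd x hx).continuousAt.continuousWithinAt
  exact continuousOn_id.prodMk (hy.prodMk (hcl.prodMk hcr))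

private lemma contOn_fd (hab : a < b) (hL : C1Lag a b L) :
    ContinuousOn (fderivWithin ℝ (fun p : ℝ × ℝ × ℝ × ℝ => L p.1 p.2.1 p.2.2.1 p.2.2.2)
      ((Set.Icc a b) ×ˢ (Set.univ : Set (ℝ × ℝ × ℝ))))
      ((Set.Icc a b) ×ˢ (Set.univ : Set (ℝ × ℝ × ℝ))) :=
  hL.continuousOn_fderivWithin ((uniqueDiffOn_Icc hab).prod uniqueDiffOn_univ) le_rfl

lemma contOn_d2lag {α β : ℝ} (hab : a < b) (hL : C1Lag a b L) {y : ℝ → ℝ}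
    (hyd : ∀ x ∈ Set.Icc a b, DifferentiableAt ℝ y x)
    (hcl : ContinuousOn (caputoLeft a α y) (Set.Icc a b))
    (hcr : ContinuousOn (caputoRight b β y) (Set.Icc a b)) :
    ContinuousOn (d2lag a b α β L y) (Set.Icc a b) := by
  have hev : Continuous fun A : (ℝ × ℝ × ℝ × ℝ) →L[ℝ] ℝ => A (0, 1, 0, 0) :=
    (ContinuousLinearMap.apply ℝ ℝ ((0, 1, 0, 0) : ℝ × ℝ × ℝ × ℝ)).continuous
  have hcomp := hev.comp_continuousOn
    ((contOn_fd hab hL).comp (contOn_curve hyd hcl hcr) (fun x hx => mem_sSet hx _ _ _))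
  exact hcomp.congr fun x hx => d2_eq_fderivWithin hL hx _ _ _

lemma contOn_d3lag {α β : ℝ} (hab : a < b) (hL : C1Lag a b L) {y : ℝ → ℝ}
    (hyd : ∀ x ∈ Set.Icc a b, DifferentiableAt ℝ y x)
    (hcl : ContinuousOn (caputoLeft a α y) (Set.Icc a b))
    (hcr : ContinuousOn (caputoRight b β y) (Set.Icc a b)) :
    ContinuousOn (d3lag a b α β L y) (Set.Icc a b) := by
  have hev : Continuous fun A : (ℝ × ℝ × ℝ × ℝ) →L[ℝ] ℝ => A (0, 0, 1, 0) :=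
    (ContinuousLinearMap.apply ℝ ℝ ((0, 0, 1, 0) : ℝ × ℝ × ℝ × ℝ)).continuous
  have hcomp := hev.comp_continuousOn
    ((contOn_fd hab hL).comp (contOn_curve hyd hcl hcr) (fun x hx => mem_sSet hx _ _ _))
  exact hcomp.congr fun x hx => d3_eq_fderivWithin hL hx _ _ _

lemma contOn_d4lag {α β : ℝ} (hab : a < b) (hL : C1Lag a b L) {y : ℝ → ℝ}
    (hyd : ∀ x ∈ Set.Icc a b, DifferentiableAt ℝ y x)
    (hcl : ContinuousOn (caputoLeft a α y) (Set.Icc a b))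
    (hcr : ContinuousOn (caputoRight b β y) (Set.Icc a b)) :
    ContinuousOn (d4lag a b α β L y) (Set.Icc a b) := by
  have hev : Continuous fun A : (ℝ × ℝ × ℝ × ℝ) →L[ℝ] ℝ => A (0, 0, 0, 1) :=
    (ContinuousLinearMap.apply ℝ ℝ ((0, 0, 0, 1) : ℝ × ℝ × ℝ × ℝ)).continuous
  have hcomp := hev.comp_continuousOn
    ((contOn_fd hab hL).comp (contOn_curve hyd hcl hcr) (fun x hx => mem_sSet hx _ _ _))
  exact hcomp.congr fun x hx => d4_eq_fderivWithin hL hx _ _ _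

lemma contOn_lag {α β : ℝ} (hL : C1Lag a b L) {y : ℝ → ℝ}
    (hyd : ∀ x ∈ Set.Icc a b, DifferentiableAt ℝ y x)
    (hcl : ContinuousOn (caputoLeft a α y) (Set.Icc a b))
    (hcr : ContinuousOn (caputoRight b β y) (Set.Icc a b)) :
    ContinuousOn (lag a b α β L y) (Set.Icc a b) :=
  hL.continuousOn.comp (contOn_curve hyd hcl hcr) (fun x hx => mem_sSet hx _ _ _)

end PartialDerivs
section CaputoSub

open MeasureTheory Set intervalIntegral

lemma caputoLeft_sub {a b α β : ℝ} {y y₀ : ℝ → ℝ} (hy : MemE a b α β y)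
    (hy0 : MemE a b α β y₀) {x : ℝ} (hx : x ∈ Set.Icc a b) :
    caputoLeft a α (fun t => y t - y₀ t) x = caputoLeft a α y x - caputoLeft a α y₀ x := by
  unfold caputoLeft
  have key : (∫ t in a..x, (x - t) ^ (-α) * deriv (fun t => y t - y₀ t) t) =
      (∫ t in a..x, (x - t) ^ (-α) * deriv y t) -
        ∫ t in a..x, (x - t) ^ (-α) * deriv y₀ t := by
    rw [← intervalIntegral.integral_sub (hy.2.1 x hx) (hy0.2.1 x hx)]
    apply intervalIntegral.integral_congr
    intro t ht
    rw [Set.uIcc_of_le hx.1] at ht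
    have h1 : DifferentiableAt ℝ y t := hy.1 t ⟨ht.1, ht.2.trans hx.2⟩
    have h2 : DifferentiableAt ℝ y₀ t := hy0.1 t ⟨ht.1, ht.2.trans hx.2⟩
    dsimp only
    rw [deriv_fun_sub h1 h2]
    ring
  rw [key]
  ring

lemma caputoRight_sub {a b α β : ℝ} {y y₀ : ℝ → ℝ} (hy : MemE a b α β y)
    (hy0 : MemE a b α β y₀) {x : ℝ} (hx : x ∈ Set.Icc a b) :
    caputoRight b β (fun t => y t - y₀ t) x = caputoRight b β y x - caputoRight b β y₀ x := by
  unfold caputoRight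
  have key : (∫ t in x..b, (t - x) ^ (-β) * deriv (fun t => y t - y₀ t) t) =
      (∫ t in x..b, (t - x) ^ (-β) * deriv y t) -
        ∫ t in x..b, (t - x) ^ (-β) * deriv y₀ t := by
    rw [← intervalIntegral.integral_sub (hy.2.2.1 x hx) (hy0.2.2.1 x hx)]
    apply intervalIntegral.integral_congr
    intro t ht
    rw [Set.uIcc_of_le hx.2] at ht
    have h1 : DifferentiableAt ℝ y t := hy.1 t ⟨hx.1.trans ht.1, ht.2⟩
    have h2 : DifferentiableAt ℝ y₀ t := hy0.1 t ⟨hx.1.trans ht.1, ht.2⟩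
    dsimp only
    rw [deriv_fun_sub h1 h2]
    ring
  rw [key]
  ring

end CaputoSub

/-- Sufficient optimality condition: if `L` is convex, then any solution of the
fractional Euler–Lagrange equation is a global minimizer of `J` among functions of `E`
with the same boundary values. -/
theorem fractional_sufficient_condition
    (α β a b : ℝ) (hα0 : 0 < α) (hα1 : α < 1) (hβ0 : 0 < β) (hβ1 : β < 1)
    (hab : a < b) (L : ℝ → ℝ → ℝ → ℝ → ℝ) (hL : C1Lag a b L)
    (hconv : ∀ x ∈ Set.Icc a b, ∀ y u v y₁ u₁ v₁ : ℝ,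
      L x (y + y₁) (u + u₁) (v + v₁) - L x y u v
        ≥ d2 L x y u v * y₁ + d3 L x y u v * u₁ + d4 L x y u v * v₁)
    (y₀ : ℝ → ℝ) (hy₀ : MemE a b α β y₀)
    (h3 : HasContRlRightDeriv b α (d3lag a b α β L y₀) (Set.Icc a b))
    (h4 : HasContRlLeftDeriv a β (d4lag a b α β L y₀) (Set.Icc a b))
    (hEL : ∀ x ∈ Set.Icc a b,
      d2lag a b α β L y₀ x
        + rlRightDeriv b α (d3lag a b α β L y₀) x
        + rlLeftDeriv a β (d4lag a b α β L y₀) x = 0) :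
    ∀ y : ℝ → ℝ, MemE a b α β y → y a = y₀ a → y b = y₀ b →
      (∫ x in a..b, lag a b α β L y₀ x) ≤ ∫ x in a..b, lag a b α β L y x := by
  intro y hy hya hyb
  have hab' : a ≤ b := hab.le
  have intCont : ∀ {f : ℝ → ℝ}, ContinuousOn f (Set.Icc a b) →
      IntervalIntegrable f MeasureTheory.volume a b := fun {f} hf =>
    ContinuousOn.intervalIntegrable (by rwa [Set.uIcc_of_le hab'])
  set g2 := d2lag a b α β L y₀ with hg2
  set g3 := d3lag a b α β L y₀ with hg3
  set g4 := d4lag a b α β L y₀ with hg4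
  set h : ℝ → ℝ := fun t => y t - y₀ t with hh
  -- continuity facts
  have hy₀c : ContinuousOn y₀ (Set.Icc a b) :=
    fun x hx => (hy₀.1 x hx).continuousAt.continuousWithinAt
  have hyc : ContinuousOn y (Set.Icc a b) :=
    fun x hx => (hy.1 x hx).continuousAt.continuousWithinAt
  have hhc : ContinuousOn h (Set.Icc a b) := hyc.sub hy₀c
  have hcLd : ContinuousOn (fun x => caputoLeft a α y x - caputoLeft a α y₀ x) (Set.Icc a b) :=
    hy.2.2.2.1.sub hy₀.2.2.2.1
  have hcRd : ContinuousOn (fun x => caputoRight b β y x - caputoRight b β y₀ x) (Set.Icc a b) :=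
    hy.2.2.2.2.sub hy₀.2.2.2.2
  have hg2c : ContinuousOn g2 (Set.Icc a b) :=
    contOn_d2lag hab hL hy₀.1 hy₀.2.2.2.1 hy₀.2.2.2.2
  have hg3c : ContinuousOn g3 (Set.Icc a b) :=
    contOn_d3lag hab hL hy₀.1 hy₀.2.2.2.1 hy₀.2.2.2.2
  have hg4c : ContinuousOn g4 (Set.Icc a b) :=
    contOn_d4lag hab hL hy₀.1 hy₀.2.2.2.1 hy₀.2.2.2.2
  set R : ℝ → ℝ := fun x => g2 x * h x + g3 x * (caputoLeft a α y x - caputoLeft a α y₀ x)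
      + g4 x * (caputoRight b β y x - caputoRight b β y₀ x) with hR
  have hRc : ContinuousOn R (Set.Icc a b) :=
    ((hg2c.mul hhc).add (hg3c.mul hcLd)).add (hg4c.mul hcRd)
  -- pointwise convexity inequality
  have hpt : ∀ x ∈ Set.Icc a b, lag a b α β L y₀ x + R x ≤ lag a b α β L y x := by
    intro x hx
    have hc := hconv x hx (y₀ x) (caputoLeft a α y₀ x) (caputoRight b β y₀ x)
      (h x) (caputoLeft a α y x - caputoLeft a α y₀ x)
      (caputoRight b β y x - caputoRight b β y₀ x)
    have e1 : y₀ x + h x = y x := by simp [hh]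
    have e2 : caputoLeft a α y₀ x + (caputoLeft a α y x - caputoLeft a α y₀ x)
        = caputoLeft a α y x := by ring
    have e3 : caputoRight b β y₀ x + (caputoRight b β y x - caputoRight b β y₀ x)
        = caputoRight b β y x := by ring
    rw [e1, e2, e3] at hc
    simp only [lag, hR, hg2, hg3, hg4, d2lag, d3lag, d4lag]
    linarith [hc]
  -- integrability of the three integrands
  have hIy : IntervalIntegrable (lag a b α β L y) MeasureTheory.volume a b :=
    intCont (contOn_lag hL hy.1 hy.2.2.2.1 hy.2.2.2.2)
  have hIy0 : IntervalIntegrable (lag a b α β L y₀) MeasureTheory.volume a b :=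
    intCont (contOn_lag hL hy₀.1 hy₀.2.2.2.1 hy₀.2.2.2.2)
  have hIR : IntervalIntegrable R MeasureTheory.volume a b := intCont hRc
  have hmono := intervalIntegral.integral_mono_on hab' (hIy0.add hIR) hIy
    (fun x hx => hpt x hx)
  rw [intervalIntegral.integral_add hIy0 hIR] at hmono
  -- the derivative of h
  have hwMeas : Measurable (deriv h) := measurable_deriv _
  have hwInt : MeasureTheory.IntegrableOn (deriv h) (Set.Icc a b) := by
    have h1 := derivIntegrable hα0 hab' hy
    have h2 := derivIntegrable hα0 hab' hy₀
    refine MeasureTheory.IntegrableOn.congr_fun (h1.sub h2)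
      (fun t ht => ?_) measurableSet_Icc
    have := (deriv_fun_sub (hy.1 t ht) (hy₀.1 t ht)).symm
    simpa [hh] using this
  have hInt_h' : IntervalIntegrable (deriv h) MeasureTheory.volume a b :=
    (intervalIntegrable_iff_integrableOn_Ioc_of_le hab').mpr
      (hwInt.mono_set Set.Ioc_subset_Icc_self)
  have hhd : ∀ x ∈ Set.uIcc a b, HasDerivAt h (deriv h x) x := by
    intro x hx
    rw [Set.uIcc_of_le hab'] at hx
    exact (((hy.1 x hx).sub (hy₀.1 x hx))).hasDerivAt
  have hha : h a = 0 := by simp [hh, hya]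
  have hhb : h b = 0 := by simp [hh, hyb]
  -- === term 3 ===
  set F3 : ℝ → ℝ := fun u => (1 / Real.Gamma (1 - α)) * ∫ t in u..b, (t - u) ^ (-α) * g3 t
    with hF3
  have term3 : (∫ x in a..b, g3 x * (caputoLeft a α y x - caputoLeft a α y₀ x)) =
      ∫ x in a..b, h x * rlRightDeriv b α g3 x := by
    have e0 : (∫ x in a..b, g3 x * (caputoLeft a α y x - caputoLeft a α y₀ x)) =
        ∫ x in a..b, g3 x * caputoLeft a α h x := by
      apply intervalIntegral.integral_congr
      intro x hx
      rw [Set.uIcc_of_le hab'] at hx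
      dsimp only
      rw [hh, caputoLeft_sub hy hy₀ hx]
    have e1 : (∫ x in a..b, g3 x * caputoLeft a α h x) =
        (1 / Real.Gamma (1 - α)) *
          ∫ x in a..b, g3 x * ∫ t in a..x, (x - t) ^ (-α) * deriv h t := by
      rw [← intervalIntegral.integral_const_mul]
      apply intervalIntegral.integral_congr
      intro x hx
      dsimp only
      simp only [caputoLeft]
      ring
    have e2 := fubini_left hα0 hα1 hab' (deriv h) g3 hwMeas hwInt hg3c
    have e3 : (1 / Real.Gamma (1 - α)) *
        (∫ t in a..b, deriv h t * ∫ x in t..b, (x - t) ^ (-α) * g3 x) =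
        ∫ t in a..b, deriv h t * F3 t := by
      rw [← intervalIntegral.integral_const_mul]
      apply intervalIntegral.integral_congr
      intro t ht
      dsimp only
      simp only [hF3]
      ring
    -- integration by parts
    have hF3d : ∀ x ∈ Set.uIcc a b, HasDerivAt F3 (deriv F3 x) x := by
      intro x hx
      rw [Set.uIcc_of_le hab'] at hx
      exact (h3.1 x hx).hasDerivAt
    have hF3' : ∀ x, deriv F3 x = - rlRightDeriv b α g3 x := by
      intro x
      simp [rlRightDeriv, hF3]
    have hIntF3' : IntervalIntegrable (deriv F3) MeasureTheory.volume a b := by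
      have heq : deriv F3 = fun x => - rlRightDeriv b α g3 x := funext hF3'
      rw [heq]
      exact intCont h3.2.neg
    have ibp := intervalIntegral.integral_mul_deriv_eq_deriv_mul hhd hF3d hInt_h' hIntF3'
    rw [hha, hhb, zero_mul, zero_mul, sub_zero, zero_sub] at ibp
    -- ibp : ∫ h x * deriv F3 x = - ∫ deriv h x * F3 x
    have e4 : (∫ t in a..b, deriv h t * F3 t) = ∫ x in a..b, h x * rlRightDeriv b α g3 x := by
      have : (∫ x in a..b, h x * rlRightDeriv b α g3 x) =
          - ∫ x in a..b, h x * deriv F3 x := by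
        rw [← intervalIntegral.integral_neg]
        apply intervalIntegral.integral_congr
        intro x hx
        dsimp only
        rw [hF3' x]
        ring
      rw [this, ibp, neg_neg]
    rw [e0, e1, e2, e3, e4]
  -- === term 4 ===
  set G4 : ℝ → ℝ := fun u => (1 / Real.Gamma (1 - β)) * ∫ t in a..u, (u - t) ^ (-β) * g4 t
    with hG4
  have term4 : (∫ x in a..b, g4 x * (caputoRight b β y x - caputoRight b β y₀ x)) =
      ∫ x in a..b, h x * rlLeftDeriv a β g4 x := by
    have e0 : (∫ x in a..b, g4 x * (caputoRight b β y x - caputoRight b β y₀ x)) =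
        ∫ x in a..b, g4 x * caputoRight b β h x := by
      apply intervalIntegral.integral_congr
      intro x hx
      rw [Set.uIcc_of_le hab'] at hx
      dsimp only
      rw [hh, caputoRight_sub hy hy₀ hx]
    have e1 : (∫ x in a..b, g4 x * caputoRight b β h x) =
        (-(1 / Real.Gamma (1 - β))) *
          ∫ x in a..b, g4 x * ∫ t in x..b, (t - x) ^ (-β) * deriv h t := by
      rw [← intervalIntegral.integral_const_mul]
      apply intervalIntegral.integral_congr
      intro x hx
      dsimp only
      simp only [caputoRight]
      ring
    have e2 := fubini_right hβ0 hβ1 hab' (deriv h) g4 hwMeas hwInt hg4c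
    have e3 : (-(1 / Real.Gamma (1 - β))) *
        (∫ t in a..b, deriv h t * ∫ x in a..t, (t - x) ^ (-β) * g4 x) =
        - ∫ t in a..b, deriv h t * G4 t := by
      rw [← intervalIntegral.integral_neg, ← intervalIntegral.integral_const_mul]
      apply intervalIntegral.integral_congr
      intro t ht
      dsimp only
      simp only [hG4]
      ring
    have hG4d : ∀ x ∈ Set.uIcc a b, HasDerivAt G4 (deriv G4 x) x := by
      intro x hx
      rw [Set.uIcc_of_le hab'] at hx
      exact (h4.1 x hx).hasDerivAt
    have hG4' : ∀ x, deriv G4 x = rlLeftDeriv a β g4 x := by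
      intro x
      simp [rlLeftDeriv, hG4]
    have hIntG4' : IntervalIntegrable (deriv G4) MeasureTheory.volume a b := by
      have heq : deriv G4 = fun x => rlLeftDeriv a β g4 x := funext hG4'
      rw [heq]
      exact intCont h4.2
    have ibp := intervalIntegral.integral_mul_deriv_eq_deriv_mul hhd hG4d hInt_h' hIntG4'
    rw [hha, hhb, zero_mul, zero_mul, sub_zero, zero_sub] at ibp
    -- ibp : ∫ h x * deriv G4 x = - ∫ deriv h x * G4 x
    have e4 : (- ∫ t in a..b, deriv h t * G4 t) = ∫ x in a..b, h x * rlLeftDeriv a β g4 x := by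
      rw [← ibp]
      apply intervalIntegral.integral_congr
      intro x hx
      dsimp only
      rw [hG4' x]
    rw [e0, e1, e2, e3, e4]
  -- === combine ===
  have hR0 : (∫ x in a..b, R x) = 0 := by
    have hI1 : IntervalIntegrable (fun x => g2 x * h x) MeasureTheory.volume a b :=
      intCont (hg2c.mul hhc)
    have hI2 : IntervalIntegrable
        (fun x => g3 x * (caputoLeft a α y x - caputoLeft a α y₀ x))
        MeasureTheory.volume a b := intCont (hg3c.mul hcLd)
    have hI3 : IntervalIntegrable
        (fun x => g4 x * (caputoRight b β y x - caputoRight b β y₀ x))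
        MeasureTheory.volume a b := intCont (hg4c.mul hcRd)
    have hsplit : (∫ x in a..b, R x) =
        ((∫ x in a..b, g2 x * h x) +
          ∫ x in a..b, g3 x * (caputoLeft a α y x - caputoLeft a α y₀ x)) +
          ∫ x in a..b, g4 x * (caputoRight b β y x - caputoRight b β y₀ x) := by
      rw [← intervalIntegral.integral_add hI1 hI2,
        ← intervalIntegral.integral_add (hI1.add hI2) hI3]
    rw [hsplit, term3, term4]
    have hI2' : IntervalIntegrable (fun x => h x * rlRightDeriv b α g3 x)
        MeasureTheory.volume a b := intCont (hhc.mul h3.2)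
    have hI3' : IntervalIntegrable (fun x => h x * rlLeftDeriv a β g4 x)
        MeasureTheory.volume a b := intCont (hhc.mul h4.2)
    rw [← intervalIntegral.integral_add hI1 hI2',
      ← intervalIntegral.integral_add (hI1.add hI2') hI3']
    have : (∫ x in a..b, (g2 x * h x + h x * rlRightDeriv b α g3 x
        + h x * rlLeftDeriv a β g4 x)) = ∫ x in a..b, (0:ℝ) := by
      apply intervalIntegral.integral_congr
      intro x hx
      rw [Set.uIcc_of_le hab'] at hx
      have hz := hEL x hx
      calc g2 x * h x + h x * rlRightDeriv b α g3 x + h x * rlLeftDeriv a β g4 x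
          = h x * (g2 x + rlRightDeriv b α g3 x + rlLeftDeriv a β g4 x) := by ring
        _ = 0 := by rw [hz, mul_zero]
    rw [this]
    simp
  linarith
end

section
/- Let 0<α,β<1 and a<b be reals, and let λ∈ℝ. Let L,g:[a,b]×ℝ³→ℝ be of class C¹ such that L and λg are both convex, in the sense that for all (x,y,u,v)∈[a,b]×ℝ³ and all (y₁,u₁,v₁)∈ℝ³: f(x,y+y₁,u+u₁,v+v₁) − f(x,y,u,v) ≥ ∂₂f(x,y,u,v)·y₁ + ∂₃f(x,y,u,v)·u₁ + ∂₄f(x,y,u,v)·v₁ (for f = L and f = λg). Set F = L + λg. Let y₀∈E be such that x ↦ ∂₃F[y₀](x) has a continuous right Riemann–Liouville derivative of order α, x ↦ ∂₄F[y₀](x) has a continuous left Riemann–Liouville derivative of order β, y₀ satisfies ∂₂F[y₀](x) + (D_{b−}^α (∂₃F[y₀]))(x) + (D_{a+}^β (∂₄F[y₀]))(x) = 0 for all x∈[a,b], and ∫_a^b g[y₀](x) dx = l. Then y₀ minimizes J(y)=∫_a^b L[y](x) dx over all y∈E with y(a)=y₀(a), y(b)=y₀(b) and ∫_a^b g[y](x)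 dx = l. -/
open MeasureTheory Set

namespace FracIso
open MeasureTheory Set intervalIntegral

/-! ### Partial derivative machinery for `C¹` Lagrangians -/

noncomputable def FD (a b : ℝ) (L : ℝ → ℝ → ℝ → ℝ → ℝ) (p : ℝ × ℝ × ℝ × ℝ) :
    (ℝ × ℝ × ℝ × ℝ) →L[ℝ] ℝ :=
  fderivWithin ℝ (fun p : ℝ × ℝ × ℝ × ℝ => L p.1 p.2.1 p.2.2.1 p.2.2.2)
    ((Set.Icc a b) ×ˢ (Set.univ : Set (ℝ × ℝ × ℝ))) p

variable {a b : ℝ} {L : ℝ → ℝ → ℝ → ℝ → ℝ}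

lemma slice2 (hL : C1Lag a b L) {x : ℝ} (hx : x ∈ Icc a b) (y u v : ℝ) :
    HasDerivAt (fun z => L x z u v) (FD a b L (x, y, u, v) (0, 1, 0, 0)) y := by
  have hc : HasDerivAt (fun z : ℝ => ((x, z, u, v) : ℝ × ℝ × ℝ × ℝ)) (0, 1, 0, 0) y :=
    (hasDerivAt_const y x).prodMk ((hasDerivAt_id y).prodMk
      ((hasDerivAt_const y u).prodMk (hasDerivAt_const y v)))
  have hmem : ((x, y, u, v) : ℝ × ℝ × ℝ × ℝ) ∈ (Icc a b) ×ˢ (univ : Set (ℝ × ℝ × ℝ)) :=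
    ⟨hx, trivial⟩
  have hfd := ((hL _ hmem).differentiableWithinAt one_ne_zero).hasFDerivWithinAt
  have hmaps : MapsTo (fun z : ℝ => ((x, z, u, v) : ℝ × ℝ × ℝ × ℝ)) univ
      ((Icc a b) ×ˢ (univ : Set (ℝ × ℝ × ℝ))) := fun z _ => ⟨hx, trivial⟩
  have := hfd.comp_hasDerivWithinAt y (hc.hasDerivWithinAt (s := univ)) hmaps
  rwa [hasDerivWithinAt_univ] at this

lemma slice3 (hL : C1Lag a b L) {x : ℝ} (hx : x ∈ Icc a b) (y u v : ℝ) :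
    HasDerivAt (fun z => L x y z v) (FD a b L (x, y, u, v) (0, 0, 1, 0)) u := by
  have hc : HasDerivAt (fun z : ℝ => ((x, y, z, v) : ℝ × ℝ × ℝ × ℝ)) (0, 0, 1, 0) u :=
    (hasDerivAt_const u x).prodMk ((hasDerivAt_const u y).prodMk
      ((hasDerivAt_id u).prodMk (hasDerivAt_const u v)))
  have hmem : ((x, y, u, v) : ℝ × ℝ × ℝ × ℝ) ∈ (Icc a b) ×ˢ (univ : Set (ℝ × ℝ × ℝ)) :=
    ⟨hx, trivial⟩
  have hfd := ((hL _ hmem).differentiableWithinAt one_ne_zero).hasFDerivWithinAt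
  have hmaps : MapsTo (fun z : ℝ => ((x, y, z, v) : ℝ × ℝ × ℝ × ℝ)) univ
      ((Icc a b) ×ˢ (univ : Set (ℝ × ℝ × ℝ))) := fun z _ => ⟨hx, trivial⟩
  have := hfd.comp_hasDerivWithinAt u (hc.hasDerivWithinAt (s := univ)) hmaps
  rwa [hasDerivWithinAt_univ] at this

lemma slice4 (hL : C1Lag a b L) {x : ℝ} (hx : x ∈ Icc a b) (y u v : ℝ) :
    HasDerivAt (fun z => L x y u z) (FD a b L (x, y, u, v) (0, 0, 0, 1)) v := by
  have hc : HasDerivAt (fun z : ℝ => ((x, y, u, z) : ℝ × ℝ × ℝ × ℝ)) (0, 0, 0, 1) v :=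
    (hasDerivAt_const v x).prodMk ((hasDerivAt_const v y).prodMk
      ((hasDerivAt_const v u).prodMk (hasDerivAt_id v)))
  have hmem : ((x, y, u, v) : ℝ × ℝ × ℝ × ℝ) ∈ (Icc a b) ×ˢ (univ : Set (ℝ × ℝ × ℝ)) :=
    ⟨hx, trivial⟩
  have hfd := ((hL _ hmem).differentiableWithinAt one_ne_zero).hasFDerivWithinAt
  have hmaps : MapsTo (fun z : ℝ => ((x, y, u, z) : ℝ × ℝ × ℝ × ℝ)) univ
      ((Icc a b) ×ˢ (univ : Set (ℝ × ℝ × ℝ))) := fun z _ => ⟨hx, trivial⟩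
  have := hfd.comp_hasDerivWithinAt v (hc.hasDerivWithinAt (s := univ)) hmaps
  rwa [hasDerivWithinAt_univ] at this

lemma d2_eq (hL : C1Lag a b L) {x : ℝ} (hx : x ∈ Icc a b) (y u v : ℝ) :
    d2 L x y u v = FD a b L (x, y, u, v) (0, 1, 0, 0) := (slice2 hL hx y u v).deriv

lemma d3_eq (hL : C1Lag a b L) {x : ℝ} (hx : x ∈ Icc a b) (y u v : ℝ) :
    d3 L x y u v = FD a b L (x, y, u, v) (0, 0, 1, 0) := (slice3 hL hx y u v).deriv

lemma d4_eq (hL : C1Lag a b L) {x : ℝ} (hx : x ∈ Icc a b) (y u v : ℝ) :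
    d4 L x y u v = FD a b L (x, y, u, v) (0, 0, 0, 1) := (slice4 hL hx y u v).deriv

lemma contFD (hL : C1Lag a b L) (hab : a < b) :
    ContinuousOn (FD a b L) ((Icc a b) ×ˢ (univ : Set (ℝ × ℝ × ℝ))) :=
  hL.continuousOn_fderivWithin ((uniqueDiffOn_Icc hab).prod uniqueDiffOn_univ) le_rfl

lemma swap_kernel_left (a b : ℝ) (hab : a < b) {r : ℝ} (hr1 : r < 1)
    (φ w : ℝ → ℝ) (hφ : Continuous φ) (hw : Measurable w)
    (hwi : IntegrableOn w (Ioc a b)) :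
    ∫ x in a..b, φ x * ∫ t in a..x, (x - t) ^ (-r) * w t
      = ∫ t in a..b, w t * ∫ x in t..b, (x - t) ^ (-r) * φ x := by
  set μ := volume.restrict (Ioc a b) with hμ
  set f : ℝ → ℝ → ℝ := fun x t => if t < x then φ x * ((x - t) ^ (-r) * w t) else 0 with hf
  have hrm : Measurable fun x : ℝ => x ^ (-r) := by measurability
  have hmeasf : Measurable (Function.uncurry f) := by
    apply Measurable.ite (measurableSet_lt measurable_snd measurable_fst)
    · exact (hφ.measurable.comp measurable_fst).mul
        ((hrm.comp (measurable_fst.sub measurable_snd)).mul (hw.comp measurable_snd))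
    · exact measurable_const
  have haesm : AEStronglyMeasurable (Function.uncurry f) (μ.prod μ) :=
    hmeasf.aestronglyMeasurable
  -- kernel integrability in x over (t, b)
  have hker : ∀ t : ℝ, IntervalIntegrable (fun x => (x - t) ^ (-r)) volume t b := by
    intro t
    have h0 : IntervalIntegrable (fun x : ℝ => x ^ (-r)) volume 0 (b - t) :=
      intervalIntegral.intervalIntegrable_rpow' (by linarith)
    have := h0.comp_sub_right t
    simpa using this
  -- sections in x are integrable
  have hsecx : ∀ t ∈ Ioc a b, Integrable (fun x => f x t) μ := by
    intro t ht
    have hfun : (fun x => f x t) = Set.indicator (Ioi t)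
        (fun x => φ x * ((x - t) ^ (-r) * w t)) := by
      funext x
      by_cases h : t < x <;> simp [hf, h, Set.indicator_apply]
    rw [hfun]
    have hbase : IntervalIntegrable (fun x => φ x * ((x - t) ^ (-r) * w t)) volume t b := by
      have h1 : IntervalIntegrable (fun x => φ x * (x - t) ^ (-r)) volume t b :=
        (hker t).continuousOn_mul hφ.continuousOn
      have := h1.mul_const (w t)
      simpa [mul_assoc] using this
    have hbase' : IntegrableOn (fun x => φ x * ((x - t) ^ (-r) * w t)) (Ioc t b) volume :=
      (intervalIntegrable_iff_integrableOn_Ioc_of_le ht.2).1 hbase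
    rw [integrable_indicator_iff measurableSet_Ioi]
    rw [IntegrableOn, hμ, Measure.restrict_restrict measurableSet_Ioi]
    have : Ioi t ∩ Ioc a b = Ioc t b := by
      ext u; constructor
      · rintro ⟨h1, h2, h3⟩; exact ⟨h1, h3⟩
      · rintro ⟨h1, h2⟩; exact ⟨h1, lt_trans ht.1 h1, h2⟩
    rwa [this]
  -- bound on φ
  obtain ⟨M, hM⟩ := isCompact_Icc.exists_bound_of_continuousOn (hφ.continuousOn (s := Icc a b))
  have hM0 : 0 ≤ M := le_trans (norm_nonneg _) (hM a ⟨le_refl a, hab.le⟩)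
  set C := M * ((b - a) ^ (1 - r) / (1 - r)) with hC
  -- value of the kernel integral
  have hkerval : ∀ t ∈ Ioc a b, (∫ x in t..b, (x - t) ^ (-r)) = (b - t) ^ (1 - r) / (1 - r) := by
    intro t ht
    rw [show (fun x => (x - t) ^ (-r)) = fun x => ((fun u : ℝ => u ^ (-r)) (x - t)) from rfl,
      intervalIntegral.integral_comp_sub_right (fun u : ℝ => u ^ (-r)) t]
    rw [integral_rpow (Or.inl (by linarith))]
    rw [sub_self, Real.zero_rpow (by intro h; linarith [h]; )]
    ring_nf
  -- second Fubini condition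
  have hcond2 : Integrable (fun t => ∫ x, ‖Function.uncurry f (x, t)‖ ∂μ) μ := by
    have haesm2 : AEStronglyMeasurable (fun t => ∫ x, ‖Function.uncurry f (x, t)‖ ∂μ) μ := by
      have := (haesm.norm.prod_swap).integral_prod_right'
      simpa using this
    apply Integrable.mono' ((hwi.norm).const_mul C) haesm2
    rw [hμ, ae_restrict_iff' measurableSet_Ioc]
    filter_upwards with t ht
    have hnonneg : 0 ≤ ∫ x, ‖Function.uncurry f (x, t)‖ ∂μ :=
      integral_nonneg fun x => norm_nonneg _
    rw [Real.norm_eq_abs, abs_of_nonneg hnonneg]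
    -- dominating function
    set G : ℝ → ℝ := fun x => Set.indicator (Ioi t) (fun x => M * ((x - t) ^ (-r)) * |w t|) x with hG
    have hGint : Integrable G μ := by
      have hbase : IntervalIntegrable (fun x => M * ((x - t) ^ (-r)) * |w t|) volume t b := by
        have := ((hker t).const_mul M).mul_const |w t|
        simpa [mul_comm, mul_assoc, mul_left_comm] using this
      have hbase' : IntegrableOn (fun x => M * ((x - t) ^ (-r)) * |w t|) (Ioc t b) volume :=
        (intervalIntegrable_iff_integrableOn_Ioc_of_le ht.2).1 hbase
      rw [hG, integrable_indicator_iff measurableSet_Ioi, IntegrableOn, hμ,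
        Measure.restrict_restrict measurableSet_Ioi]
      have hset : Ioi t ∩ Ioc a b = Ioc t b := by
        ext u; constructor
        · rintro ⟨h1, h2, h3⟩; exact ⟨h1, h3⟩
        · rintro ⟨h1, h2⟩; exact ⟨h1, lt_trans ht.1 h1, h2⟩
      rwa [hset]
    have hle : (∫ x, ‖Function.uncurry f (x, t)‖ ∂μ) ≤ ∫ x, G x ∂μ := by
      apply integral_mono_of_nonneg (Filter.Eventually.of_forall fun x => norm_nonneg _) hGint
      rw [hμ]
      refine (ae_restrict_iff' measurableSet_Ioc).2 ?_
      filter_upwards with x hx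
      show ‖Function.uncurry f (x, t)‖ ≤ (Ioi t).indicator (fun x => M * (x - t) ^ (-r) * |w t|) x
      by_cases h : t < x
      · have hpow : 0 ≤ (x - t) ^ (-r) := Real.rpow_nonneg (by linarith) _
        have h1 : ‖Function.uncurry f (x, t)‖ = |φ x| * ((x - t) ^ (-r) * |w t|) := by
          simp [Function.uncurry, hf, h, abs_mul, abs_of_nonneg hpow]
        rw [h1, Set.indicator_of_mem (Set.mem_Ioi.2 h)]
        have hMx : |φ x| ≤ M := by
          have := hM x ⟨le_of_lt (lt_trans ht.1 h), hx.2⟩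
          rwa [Real.norm_eq_abs] at this
        calc |φ x| * ((x - t) ^ (-r) * |w t|) ≤ M * ((x - t) ^ (-r) * |w t|) :=
              mul_le_mul_of_nonneg_right hMx (mul_nonneg hpow (abs_nonneg _))
          _ = M * (x - t) ^ (-r) * |w t| := by ring
      · have h1 : ‖Function.uncurry f (x, t)‖ = 0 := by
          simp [Function.uncurry, hf, h]
        rw [h1]
        by_cases h2 : x ∈ Ioi t
        · exact absurd h2 h
        · rw [Set.indicator_of_notMem h2]
    have hGval : (∫ x, G x ∂μ) ≤ C * ‖w t‖ := by
      rw [hG, MeasureTheory.integral_indicator measurableSet_Ioi, hμ,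
        Measure.restrict_restrict measurableSet_Ioi]
      have hset : Ioi t ∩ Ioc a b = Ioc t b := by
        ext u; constructor
        · rintro ⟨h1, h2, h3⟩; exact ⟨h1, h3⟩
        · rintro ⟨h1, h2⟩; exact ⟨h1, lt_trans ht.1 h1, h2⟩
      rw [hset, ← intervalIntegral.integral_of_le ht.2]
      have : (∫ x in t..b, M * (x - t) ^ (-r) * |w t|)
          = M * ((b - t) ^ (1 - r) / (1 - r)) * |w t| := by
        rw [intervalIntegral.integral_mul_const, intervalIntegral.integral_const_mul,
          hkerval t ht]
      rw [this, Real.norm_eq_abs]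
      have hbt : (b - t) ^ (1 - r) ≤ (b - a) ^ (1 - r) :=
        Real.rpow_le_rpow (by linarith [ht.2]) (by linarith [ht.1]) (by linarith)
      have : M * ((b - t) ^ (1 - r) / (1 - r)) ≤ C := by
        rw [hC]
        apply mul_le_mul_of_nonneg_left _ hM0
        have h1r : (0:ℝ) < 1 - r := by linarith
        exact by gcongr
      have habs : M * ((b - t) ^ (1 - r) / (1 - r)) * |w t| ≤ C * |w t| :=
        mul_le_mul_of_nonneg_right this (abs_nonneg _)
      linarith
    linarith
  have hint : Integrable (Function.uncurry f) (μ.prod μ) := by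
    rw [integrable_prod_iff' haesm]
    refine ⟨?_, hcond2⟩
    rw [hμ]
    refine (ae_restrict_iff' measurableSet_Ioc).2 ?_
    filter_upwards with t ht
    exact hsecx t ht
  have hswap := integral_integral_swap (f := f) hint
  have hsetL : ∀ x ∈ Ioc a b, Iio x ∩ Ioc a b = Ioo a x := by
    intro x hx; ext t; constructor
    · rintro ⟨h1, h2, h3⟩; exact ⟨h2, h1⟩
    · rintro ⟨h1, h2⟩; exact ⟨h2, h1, le_trans h2.le hx.2⟩
  have hsetR : ∀ t ∈ Ioc a b, Ioi t ∩ Ioc a b = Ioc t b := by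
    intro t ht; ext u; constructor
    · rintro ⟨h1, h2, h3⟩; exact ⟨h1, h3⟩
    · rintro ⟨h1, h2⟩; exact ⟨h1, lt_trans ht.1 h1, h2⟩
  have hL : (∫ x, ∫ t, f x t ∂μ ∂μ)
      = ∫ x in a..b, φ x * ∫ t in a..x, (x - t) ^ (-r) * w t := by
    rw [intervalIntegral.integral_of_le hab.le, hμ]
    apply setIntegral_congr_fun measurableSet_Ioc
    intro x hx
    have hfun : (fun t => f x t)
        = Set.indicator (Iio x) (fun t => φ x * ((x - t) ^ (-r) * w t)) := by
      funext t; by_cases h : t < x <;> simp [hf, h, Set.indicator_apply]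
    calc (∫ t, f x t ∂μ)
        = ∫ t in Iio x ∩ Ioc a b, φ x * ((x - t) ^ (-r) * w t) := by
          rw [hfun, MeasureTheory.integral_indicator measurableSet_Iio, hμ,
            Measure.restrict_restrict measurableSet_Iio]
      _ = ∫ t in Ioo a x, φ x * ((x - t) ^ (-r) * w t) := by rw [hsetL x hx]
      _ = φ x * ∫ t in a..x, (x - t) ^ (-r) * w t := by
          rw [← integral_Ioc_eq_integral_Ioo, ← intervalIntegral.integral_of_le hx.1.le,
            intervalIntegral.integral_const_mul]
  have hR : (∫ t, ∫ x, f x t ∂μ ∂μ)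
      = ∫ t in a..b, w t * ∫ x in t..b, (x - t) ^ (-r) * φ x := by
    rw [intervalIntegral.integral_of_le hab.le, hμ]
    apply setIntegral_congr_fun measurableSet_Ioc
    intro t ht
    have hfun : (fun x => f x t)
        = Set.indicator (Ioi t) (fun x => ((x - t) ^ (-r) * φ x) * w t) := by
      funext x; by_cases h : t < x <;> simp [hf, h, Set.indicator_apply] <;> ring
    calc (∫ x, f x t ∂μ)
        = ∫ x in Ioi t ∩ Ioc a b, ((x - t) ^ (-r) * φ x) * w t := by
          rw [hfun, MeasureTheory.integral_indicator measurableSet_Ioi, hμ,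
            Measure.restrict_restrict measurableSet_Ioi]
      _ = ∫ x in Ioc t b, ((x - t) ^ (-r) * φ x) * w t := by rw [hsetR t ht]
      _ = w t * ∫ x in t..b, (x - t) ^ (-r) * φ x := by
          rw [← intervalIntegral.integral_of_le ht.2, intervalIntegral.integral_mul_const,
            mul_comm]
  rw [← hL, ← hR]
  exact hswap

lemma swap_kernel_right (a b : ℝ) (hab : a < b) {r : ℝ} (hr1 : r < 1)
    (φ w : ℝ → ℝ) (hφ : Continuous φ) (hw : Measurable w)
    (hwi : IntegrableOn w (Ioc a b)) :
    ∫ x in a..b, φ x * ∫ t in x..b, (t - x) ^ (-r) * w t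
      = ∫ t in a..b, w t * ∫ x in a..t, (t - x) ^ (-r) * φ x := by
  set μ := volume.restrict (Ioc a b) with hμ
  set f : ℝ → ℝ → ℝ := fun x t => if x < t then φ x * ((t - x) ^ (-r) * w t) else 0 with hf
  have hrm : Measurable fun x : ℝ => x ^ (-r) := by measurability
  have hmeasf : Measurable (Function.uncurry f) := by
    apply Measurable.ite (measurableSet_lt measurable_fst measurable_snd)
    · exact (hφ.measurable.comp measurable_fst).mul
        ((hrm.comp (measurable_snd.sub measurable_fst)).mul (hw.comp measurable_snd))
    · exact measurable_const
  have haesm : AEStronglyMeasurable (Function.uncurry f) (μ.prod μ) :=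
    hmeasf.aestronglyMeasurable
  have hker : ∀ t : ℝ, IntervalIntegrable (fun x => (t - x) ^ (-r)) volume a t := by
    intro t
    have h0 : IntervalIntegrable (fun x : ℝ => x ^ (-r)) volume (t - a) 0 :=
      intervalIntegral.intervalIntegrable_rpow' (by linarith)
    have := h0.comp_sub_left t
    simpa using this
  have hkerval : ∀ t, (∫ x in a..t, (t - x) ^ (-r)) = (t - a) ^ (1 - r) / (1 - r) := by
    intro t
    rw [show (fun x => (t - x) ^ (-r)) = fun x => ((fun u : ℝ => u ^ (-r)) (t - x)) from rfl,
      intervalIntegral.integral_comp_sub_left (fun u : ℝ => u ^ (-r)) t]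
    rw [integral_rpow (Or.inl (by linarith))]
    rw [sub_self, Real.zero_rpow (by intro h; linarith [h])]
    ring_nf
  have hsetx : ∀ t ∈ Ioc a b, Iio t ∩ Ioc a b = Ioo a t := by
    intro t ht; ext u; constructor
    · rintro ⟨h1, h2, h3⟩; exact ⟨h2, h1⟩
    · rintro ⟨h1, h2⟩; exact ⟨h2, h1, le_trans h2.le ht.2⟩
  have hsecx : ∀ t ∈ Ioc a b, Integrable (fun x => f x t) μ := by
    intro t ht
    have hfun : (fun x => f x t) = Set.indicator (Iio t)
        (fun x => φ x * ((t - x) ^ (-r) * w t)) := by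
      funext x; by_cases h : x < t <;> simp [hf, h, Set.indicator_apply]
    rw [hfun]
    have hbase : IntervalIntegrable (fun x => φ x * ((t - x) ^ (-r) * w t)) volume a t := by
      have h1 : IntervalIntegrable (fun x => φ x * (t - x) ^ (-r)) volume a t :=
        (hker t).continuousOn_mul hφ.continuousOn
      have := h1.mul_const (w t)
      simpa [mul_assoc] using this
    have hbase' : IntegrableOn (fun x => φ x * ((t - x) ^ (-r) * w t)) (Ioo a t) volume := by
      have := (intervalIntegrable_iff_integrableOn_Ioc_of_le ht.1.le).1 hbase
      exact this.mono_set Ioo_subset_Ioc_self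
    rw [integrable_indicator_iff measurableSet_Iio]
    rw [IntegrableOn, hμ, Measure.restrict_restrict measurableSet_Iio, hsetx t ht]
    exact hbase'
  obtain ⟨M, hM⟩ := isCompact_Icc.exists_bound_of_continuousOn (hφ.continuousOn (s := Icc a b))
  have hM0 : 0 ≤ M := le_trans (norm_nonneg _) (hM a ⟨le_refl a, hab.le⟩)
  set C := M * ((b - a) ^ (1 - r) / (1 - r)) with hC
  have hcond2 : Integrable (fun t => ∫ x, ‖Function.uncurry f (x, t)‖ ∂μ) μ := by
    have haesm2 : AEStronglyMeasurable (fun t => ∫ x, ‖Function.uncurry f (x, t)‖ ∂μ) μ := by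
      have := (haesm.norm.prod_swap).integral_prod_right'
      simpa using this
    apply Integrable.mono' ((hwi.norm).const_mul C) haesm2
    rw [hμ]
    refine (ae_restrict_iff' measurableSet_Ioc).2 ?_
    filter_upwards with t ht
    have hnonneg : 0 ≤ ∫ x, ‖Function.uncurry f (x, t)‖ ∂μ :=
      integral_nonneg fun x => norm_nonneg _
    rw [Real.norm_eq_abs, abs_of_nonneg hnonneg]
    set G : ℝ → ℝ := fun x => Set.indicator (Iio t) (fun x => M * ((t - x) ^ (-r)) * |w t|) x
      with hG
    have hGint : Integrable G μ := by
      have hbase : IntervalIntegrable (fun x => M * ((t - x) ^ (-r)) * |w t|) volume a t := by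
        have := ((hker t).const_mul M).mul_const |w t|
        simpa [mul_comm, mul_assoc, mul_left_comm] using this
      have hbase' : IntegrableOn (fun x => M * ((t - x) ^ (-r)) * |w t|) (Ioo a t) volume := by
        have := (intervalIntegrable_iff_integrableOn_Ioc_of_le ht.1.le).1 hbase
        exact this.mono_set Ioo_subset_Ioc_self
      rw [hG, integrable_indicator_iff measurableSet_Iio, IntegrableOn, hμ,
        Measure.restrict_restrict measurableSet_Iio, hsetx t ht]
      exact hbase'
    have hle : (∫ x, ‖Function.uncurry f (x, t)‖ ∂μ) ≤ ∫ x, G x ∂μ := by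
      apply integral_mono_of_nonneg (Filter.Eventually.of_forall fun x => norm_nonneg _) hGint
      rw [hμ]
      refine (ae_restrict_iff' measurableSet_Ioc).2 ?_
      filter_upwards with x hx
      show ‖Function.uncurry f (x, t)‖
          ≤ (Iio t).indicator (fun x => M * (t - x) ^ (-r) * |w t|) x
      by_cases h : x < t
      · have hpow : 0 ≤ (t - x) ^ (-r) := Real.rpow_nonneg (by linarith) _
        have h1 : ‖Function.uncurry f (x, t)‖ = |φ x| * ((t - x) ^ (-r) * |w t|) := by
          simp [Function.uncurry, hf, h, abs_mul, abs_of_nonneg hpow]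
        rw [h1, Set.indicator_of_mem (Set.mem_Iio.2 h)]
        have hMx : |φ x| ≤ M := by
          have := hM x ⟨hx.1.le, hx.2⟩
          rwa [Real.norm_eq_abs] at this
        calc |φ x| * ((t - x) ^ (-r) * |w t|) ≤ M * ((t - x) ^ (-r) * |w t|) :=
              mul_le_mul_of_nonneg_right hMx (mul_nonneg hpow (abs_nonneg _))
          _ = M * (t - x) ^ (-r) * |w t| := by ring
      · have h1 : ‖Function.uncurry f (x, t)‖ = 0 := by
          simp [Function.uncurry, hf, h]
        rw [h1]
        by_cases h2 : x ∈ Iio t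
        · exact absurd h2 h
        · rw [Set.indicator_of_notMem h2]
    have hGval : (∫ x, G x ∂μ) ≤ C * ‖w t‖ := by
      rw [hG, MeasureTheory.integral_indicator measurableSet_Iio, hμ,
        Measure.restrict_restrict measurableSet_Iio, hsetx t ht,
        ← integral_Ioc_eq_integral_Ioo, ← intervalIntegral.integral_of_le ht.1.le]
      have hval : (∫ x in a..t, M * (t - x) ^ (-r) * |w t|)
          = M * ((t - a) ^ (1 - r) / (1 - r)) * |w t| := by
        rw [intervalIntegral.integral_mul_const, intervalIntegral.integral_const_mul,
          hkerval t]
      rw [hval, Real.norm_eq_abs]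
      have hbt : (t - a) ^ (1 - r) ≤ (b - a) ^ (1 - r) :=
        Real.rpow_le_rpow (by linarith [ht.1]) (by linarith [ht.2]) (by linarith)
      have hCle : M * ((t - a) ^ (1 - r) / (1 - r)) ≤ C := by
        rw [hC]
        apply mul_le_mul_of_nonneg_left _ hM0
        have h1r : (0:ℝ) < 1 - r := by linarith
        exact by gcongr
      have habs : M * ((t - a) ^ (1 - r) / (1 - r)) * |w t| ≤ C * |w t| :=
        mul_le_mul_of_nonneg_right hCle (abs_nonneg _)
      linarith
    linarith
  have hint : Integrable (Function.uncurry f) (μ.prod μ) := by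
    rw [integrable_prod_iff' haesm]
    refine ⟨?_, hcond2⟩
    rw [hμ]
    refine (ae_restrict_iff' measurableSet_Ioc).2 ?_
    filter_upwards with t ht
    exact hsecx t ht
  have hswap := integral_integral_swap (f := f) hint
  have hsetR : ∀ x ∈ Ioc a b, Ioi x ∩ Ioc a b = Ioc x b := by
    intro x hx; ext u; constructor
    · rintro ⟨h1, h2, h3⟩; exact ⟨h1, h3⟩
    · rintro ⟨h1, h2⟩; exact ⟨h1, lt_trans hx.1 h1, h2⟩
  have hL : (∫ x, ∫ t, f x t ∂μ ∂μ)
      = ∫ x in a..b, φ x * ∫ t in x..b, (t - x) ^ (-r) * w t := by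
    rw [intervalIntegral.integral_of_le hab.le, hμ]
    apply setIntegral_congr_fun measurableSet_Ioc
    intro x hx
    have hfun : (fun t => f x t)
        = Set.indicator (Ioi x) (fun t => φ x * ((t - x) ^ (-r) * w t)) := by
      funext t; by_cases h : x < t <;> simp [hf, h, Set.indicator_apply]
    calc (∫ t, f x t ∂μ)
        = ∫ t in Ioi x ∩ Ioc a b, φ x * ((t - x) ^ (-r) * w t) := by
          rw [hfun, MeasureTheory.integral_indicator measurableSet_Ioi, hμ,
            Measure.restrict_restrict measurableSet_Ioi]
      _ = ∫ t in Ioc x b, φ x * ((t - x) ^ (-r) * w t) := by rw [hsetR x hx]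
      _ = φ x * ∫ t in x..b, (t - x) ^ (-r) * w t := by
          rw [← intervalIntegral.integral_of_le hx.2, intervalIntegral.integral_const_mul]
  have hR : (∫ t, ∫ x, f x t ∂μ ∂μ)
      = ∫ t in a..b, w t * ∫ x in a..t, (t - x) ^ (-r) * φ x := by
    rw [intervalIntegral.integral_of_le hab.le, hμ]
    apply setIntegral_congr_fun measurableSet_Ioc
    intro t ht
    have hfun : (fun x => f x t)
        = Set.indicator (Iio t) (fun x => ((t - x) ^ (-r) * φ x) * w t) := by
      funext x; by_cases h : x < t <;> simp [hf, h, Set.indicator_apply] <;> ring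
    calc (∫ x, f x t ∂μ)
        = ∫ x in Iio t ∩ Ioc a b, ((t - x) ^ (-r) * φ x) * w t := by
          rw [hfun, MeasureTheory.integral_indicator measurableSet_Iio, hμ,
            Measure.restrict_restrict measurableSet_Iio]
      _ = ∫ x in Ioo a t, ((t - x) ^ (-r) * φ x) * w t := by rw [hsetx t ht]
      _ = w t * ∫ x in a..t, (t - x) ^ (-r) * φ x := by
          rw [← integral_Ioc_eq_integral_Ioo, ← intervalIntegral.integral_of_le ht.1.le,
            intervalIntegral.integral_mul_const, mul_comm]
  rw [← hL, ← hR]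
  exact hswap


lemma ibp {a b : ℝ} (hab : a ≤ b) {H K w : ℝ → ℝ}
    (hH : ∀ t ∈ Icc a b, HasDerivAt H (w t) t)
    (hK : ∀ t ∈ Icc a b, DifferentiableAt ℝ K t)
    (hw : IntervalIntegrable w volume a b)
    (hK' : IntervalIntegrable (deriv K) volume a b)
    (hHa : H a = 0) (hHb : H b = 0) :
    ∫ t in a..b, w t * K t = - ∫ t in a..b, deriv K t * H t := by
  have h := intervalIntegral.integral_mul_deriv_eq_deriv_mul
    (u := K) (u' := deriv K) (v := H) (v' := w)
    (fun x hx => (hK x (by rwa [uIcc_of_le hab] at hx)).hasDerivAt)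
    (fun x hx => hH x (by rwa [uIcc_of_le hab] at hx)) hK' hw
  have hcomm : (∫ t in a..b, w t * K t) = ∫ t in a..b, K t * w t :=
    intervalIntegral.integral_congr fun t _ => mul_comm _ _
  rw [hcomm, h, hHa, hHb]; ring

lemma lag_continuousOn {α β : ℝ} (hL : C1Lag a b L) {y : ℝ → ℝ}
    (hy : ContinuousOn
      (fun x => ((x, y x, caputoLeft a α y x, caputoRight b β y x) : ℝ × ℝ × ℝ × ℝ))
      (Icc a b)) :
    ContinuousOn (lag a b α β L y) (Icc a b) :=
  hL.continuousOn.comp hy (fun _ hx => ⟨hx, trivial⟩)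

lemma d3lag_continuousOn {α β : ℝ} (hL : C1Lag a b L) (hab : a < b) {y : ℝ → ℝ}
    (hy : ContinuousOn
      (fun x => ((x, y x, caputoLeft a α y x, caputoRight b β y x) : ℝ × ℝ × ℝ × ℝ))
      (Icc a b)) :
    ContinuousOn (d3lag a b α β L y) (Icc a b) := by
  have h := (((contFD hL hab).comp hy (fun _ hx => ⟨hx, trivial⟩)).clm_apply
    (continuousOn_const (c := ((0, 0, 1, 0) : ℝ × ℝ × ℝ × ℝ))))
  exact h.congr fun x hx => d3_eq hL hx _ _ _

lemma d4lag_continuousOn {α β : ℝ} (hL : C1Lag a b L) (hab : a < b) {y : ℝ → ℝ}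
    (hy : ContinuousOn
      (fun x => ((x, y x, caputoLeft a α y x, caputoRight b β y x) : ℝ × ℝ × ℝ × ℝ))
      (Icc a b)) :
    ContinuousOn (d4lag a b α β L y) (Icc a b) := by
  have h := (((contFD hL hab).comp hy (fun _ hx => ⟨hx, trivial⟩)).clm_apply
    (continuousOn_const (c := ((0, 0, 0, 1) : ℝ × ℝ × ℝ × ℝ))))
  exact h.congr fun x hx => d4_eq hL hx _ _ _

end FracIso
/-- Sufficient optimality condition for the fractional isoperimetric problem:
if `L` and `λg` are convex and `y₀` solves the Euler–Lagrange equation for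
`F = L + λg` and satisfies the integral constraint, then `y₀` minimizes `J` among
functions of `E` with the same boundary values satisfying the constraint. -/
theorem fractional_isoperimetric_sufficient_condition
    (α β a b lam l : ℝ) (hα0 : 0 < α) (hα1 : α < 1) (hβ0 : 0 < β) (hβ1 : β < 1)
    (hab : a < b) (L g : ℝ → ℝ → ℝ → ℝ → ℝ) (hL : C1Lag a b L) (hg : C1Lag a b g)
    (hconvL : ∀ x ∈ Set.Icc a b, ∀ y u v y₁ u₁ v₁ : ℝ,
      L x (y + y₁) (u + u₁) (v + v₁) - L x y u v
        ≥ d2 L x y u v * y₁ + d3 L x y u v * u₁ + d4 L x y u v * v₁)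
    (hconvg : ∀ x ∈ Set.Icc a b, ∀ y u v y₁ u₁ v₁ : ℝ,
      lam * g x (y + y₁) (u + u₁) (v + v₁) - lam * g x y u v
        ≥ d2 (fun p q r s => lam * g p q r s) x y u v * y₁
          + d3 (fun p q r s => lam * g p q r s) x y u v * u₁
          + d4 (fun p q r s => lam * g p q r s) x y u v * v₁)
    (y₀ : ℝ → ℝ) (hy₀ : MemE a b α β y₀)
    (h3 : HasContRlRightDeriv b α (d3lag a b α β (combo 1 lam L g) y₀) (Set.Icc a b))
    (h4 : HasContRlLeftDeriv a β (d4lag a b α β (combo 1 lam L g) y₀) (Set.Icc a b))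
    (hEL : ∀ x ∈ Set.Icc a b,
      d2lag a b α β (combo 1 lam L g) y₀ x
        + rlRightDeriv b α (d3lag a b α β (combo 1 lam L g) y₀) x
        + rlLeftDeriv a β (d4lag a b α β (combo 1 lam L g) y₀) x = 0)
    (hcon : (∫ x in a..b, lag a b α β g y₀ x) = l) :
    ∀ y : ℝ → ℝ, MemE a b α β y → y a = y₀ a → y b = y₀ b →
      (∫ x in a..b, lag a b α β g y x) = l →
      (∫ x in a..b, lag a b α β L y₀ x) ≤ ∫ x in a..b, lag a b α β L y x := by
  intro y hy hya hyb hcony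
  obtain ⟨hy₀d, hy₀iL, hy₀iR, hy₀cL, hy₀cR⟩ := hy₀
  obtain ⟨hyd, hyiL, hyiR, hycL, hycR⟩ := hy
  set F := combo 1 lam L g with hFdef
  have hF : C1Lag a b F := by
    unfold C1Lag
    have h1 : (fun p : ℝ × ℝ × ℝ × ℝ => F p.1 p.2.1 p.2.2.1 p.2.2.2)
        = fun p : ℝ × ℝ × ℝ × ℝ => 1 * (L p.1 p.2.1 p.2.2.1 p.2.2.2)
          + lam * (g p.1 p.2.1 p.2.2.1 p.2.2.2) := rfl
    rw [h1]
    exact (contDiffOn_const.mul hL).add (contDiffOn_const.mul hg)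
  -- continuity of curves
  have hy₀cont : ContinuousOn y₀ (Set.Icc a b) :=
    fun x hx => (hy₀d x hx).continuousAt.continuousWithinAt
  have hycont : ContinuousOn y (Set.Icc a b) :=
    fun x hx => (hyd x hx).continuousAt.continuousWithinAt
  have hcurve₀ : ContinuousOn
      (fun x => ((x, y₀ x, caputoLeft a α y₀ x, caputoRight b β y₀ x) : ℝ × ℝ × ℝ × ℝ))
      (Set.Icc a b) := continuousOn_id.prodMk (hy₀cont.prodMk (hy₀cL.prodMk hy₀cR))
  have hcurvey : ContinuousOn
      (fun x => ((x, y x, caputoLeft a α y x, caputoRight b β y x) : ℝ × ℝ × ℝ × ℝ))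
      (Set.Icc a b) := continuousOn_id.prodMk (hycont.prodMk (hycL.prodMk hycR))
  set φ := d3lag a b α β F y₀ with hφdef
  set ψ := d4lag a b α β F y₀ with hψdef
  set A := rlRightDeriv b α φ with hAdef
  set B := rlLeftDeriv a β ψ with hBdef
  have hφc : ContinuousOn φ (Set.Icc a b) := FracIso.d3lag_continuousOn hF hab hcurve₀
  have hψc : ContinuousOn ψ (Set.Icc a b) := FracIso.d4lag_continuousOn hF hab hcurve₀
  have hAc : ContinuousOn A (Set.Icc a b) := h3.2
  have hBc : ContinuousOn B (Set.Icc a b) := h4.2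
  -- global continuous extensions of φ and ψ
  set φe : ℝ → ℝ := fun x => φ (Set.projIcc a b hab.le x) with hφedef
  set ψe : ℝ → ℝ := fun x => ψ (Set.projIcc a b hab.le x) with hψedef
  have hφe : Continuous φe :=
    hφc.comp_continuous (continuous_subtype_val.comp continuous_projIcc)
      fun x => (Set.projIcc a b hab.le x).2
  have hψe : Continuous ψe :=
    hψc.comp_continuous (continuous_subtype_val.comp continuous_projIcc)
      fun x => (Set.projIcc a b hab.le x).2
  have hφe_eq : ∀ x ∈ Set.Icc a b, φe x = φ x := by
    intro x hx; simp [hφedef, Set.projIcc_of_mem hab.le hx]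
  have hψe_eq : ∀ x ∈ Set.Icc a b, ψe x = ψ x := by
    intro x hx; simp [hψedef, Set.projIcc_of_mem hab.le hx]
  -- difference functions
  set H : ℝ → ℝ := fun t => y t - y₀ t with hHdef
  set w : ℝ → ℝ := fun t => deriv y t - deriv y₀ t with hwdef
  have hHa : H a = 0 := by simp [hHdef, hya]
  have hHb : H b = 0 := by simp [hHdef, hyb]
  have hHd : ∀ t ∈ Set.Icc a b, HasDerivAt H (w t) t := fun t ht =>
    ((hyd t ht).hasDerivAt).sub ((hy₀d t ht).hasDerivAt)
  have hHc : ContinuousOn H (Set.Icc a b) := hycont.sub hy₀cont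
  have hwmeas : Measurable w := (measurable_deriv y).sub (measurable_deriv y₀)
  -- integrability of w
  have hwL : IntervalIntegrable (fun t => (b - t) ^ (-α) * w t) volume a b := by
    have h1 := hyiL b (Set.right_mem_Icc.2 hab.le)
    have h2 := hy₀iL b (Set.right_mem_Icc.2 hab.le)
    have := h1.sub h2
    simpa [hwdef, mul_sub] using this
  have hwint : MeasureTheory.IntegrableOn w (Set.Ioc a b) := by
    rw [integrableOn_Ioc_iff_integrableOn_Ioo]
    have hgint : MeasureTheory.IntegrableOn
        (fun t => (b - a) ^ α * ‖(b - t) ^ (-α) * w t‖) (Set.Ioo a b) := by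
      have := ((intervalIntegrable_iff_integrableOn_Ioc_of_le hab.le).1 hwL).norm
      exact MeasureTheory.IntegrableOn.mono_set (this.const_mul _) Set.Ioo_subset_Ioc_self
    apply MeasureTheory.Integrable.mono' hgint
      (hwmeas.aestronglyMeasurable.restrict)
    refine (MeasureTheory.ae_restrict_iff' measurableSet_Ioo).2 ?_
    filter_upwards with t ht
    have hbt : 0 < b - t := by linarith [ht.2]
    have hba : 0 < b - a := by linarith
    have hk : (b - a) ^ (-α) ≤ (b - t) ^ (-α) :=
      Real.rpow_le_rpow_of_nonpos hbt (by linarith [ht.1]) (by linarith)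
    have hknn : 0 ≤ (b - t) ^ (-α) := Real.rpow_nonneg hbt.le _
    rw [Real.norm_eq_abs, norm_mul, Real.norm_eq_abs, Real.norm_eq_abs,
      abs_of_nonneg hknn]
    have hone : 1 ≤ (b - a) ^ α * (b - t) ^ (-α) := by
      have h2 : (b - a) ^ α * (b - a) ^ (-α) = 1 := by
        rw [← Real.rpow_add hba]; simp
      calc (1:ℝ) = (b - a) ^ α * (b - a) ^ (-α) := h2.symm
        _ ≤ (b - a) ^ α * (b - t) ^ (-α) :=
          mul_le_mul_of_nonneg_left hk (Real.rpow_nonneg hba.le _)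
    calc |w t| = 1 * |w t| := (one_mul _).symm
      _ ≤ ((b - a) ^ α * (b - t) ^ (-α)) * |w t| :=
          mul_le_mul_of_nonneg_right hone (abs_nonneg _)
      _ = (b - a) ^ α * ((b - t) ^ (-α) * |w t|) := by ring
  have hwB : IntervalIntegrable w volume a b :=
    (intervalIntegrable_iff_integrableOn_Ioc_of_le hab.le).2 hwint
  -- U and V : differences of Caputo derivatives
  set U : ℝ → ℝ := fun x => caputoLeft a α y x - caputoLeft a α y₀ x with hUdef
  set V : ℝ → ℝ := fun x => caputoRight b β y x - caputoRight b β y₀ x with hVdef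
  have hUc : ContinuousOn U (Set.Icc a b) := hycL.sub hy₀cL
  have hVc : ContinuousOn V (Set.Icc a b) := hycR.sub hy₀cR
  have hUeq : ∀ x ∈ Set.Icc a b,
      U x = (1 / Real.Gamma (1 - α)) * ∫ t in a..x, (x - t) ^ (-α) * w t := by
    intro x hx
    simp only [hUdef, caputoLeft]
    rw [← mul_sub, ← intervalIntegral.integral_sub (hyiL x hx) (hy₀iL x hx)]
    congr 1
    apply intervalIntegral.integral_congr
    intro t _
    simp [hwdef, mul_sub]
  have hVeq : ∀ x ∈ Set.Icc a b,
      V x = -((1 / Real.Gamma (1 - β)) * ∫ t in x..b, (t - x) ^ (-β) * w t) := by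
    intro x hx
    have h1 : (∫ t in x..b, (t - x) ^ (-β) * w t)
        = (∫ t in x..b, (t - x) ^ (-β) * deriv y t)
          - ∫ t in x..b, (t - x) ^ (-β) * deriv y₀ t := by
      rw [← intervalIntegral.integral_sub (hyiR x hx) (hy₀iR x hx)]
      apply intervalIntegral.integral_congr
      intro t _
      simp [hwdef, mul_sub]
    simp only [hVdef, caputoRight]
    rw [h1]; ring
  -- the auxiliary functions from the RL-derivative hypotheses
  set K : ℝ → ℝ := fun u => (1 / Real.Gamma (1 - α)) * ∫ t in u..b, (t - u) ^ (-α) * φ t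
    with hKdef
  set M : ℝ → ℝ := fun u => (1 / Real.Gamma (1 - β)) * ∫ t in a..u, (u - t) ^ (-β) * ψ t
    with hMdef
  have hKd : ∀ x ∈ Set.Icc a b, DifferentiableAt ℝ K x := h3.1
  have hMd : ∀ x ∈ Set.Icc a b, DifferentiableAt ℝ M x := h4.1
  have hA_eq : ∀ x, A x = -deriv K x := fun x => rfl
  have hB_eq : ∀ x, B x = deriv M x := fun x => rfl
  have hK'c : ContinuousOn (deriv K) (Set.Icc a b) := by
    have : ContinuousOn (fun x => -A x) (Set.Icc a b) := hAc.neg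
    exact this.congr fun x _ => by beta_reduce; rw [hA_eq x]; ring
  have hM'c : ContinuousOn (deriv M) (Set.Icc a b) := hBc.congr fun x _ => (hB_eq x).symm
  have hK'int : IntervalIntegrable (deriv K) volume a b := by
    apply ContinuousOn.intervalIntegrable; rwa [Set.uIcc_of_le hab.le]
  have hM'int : IntervalIntegrable (deriv M) volume a b := by
    apply ContinuousOn.intervalIntegrable; rwa [Set.uIcc_of_le hab.le]
  have hΓα : 0 < Real.Gamma (1 - α) := Real.Gamma_pos_of_pos (by linarith)
  have hΓβ : 0 < Real.Gamma (1 - β) := Real.Gamma_pos_of_pos (by linarith)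
  -- α side: Fubini swap then integration by parts
  have hswapα := FracIso.swap_kernel_left a b hab hα1 φe w hφe hwmeas hwint
  have hLα : (∫ x in a..b, φe x * ∫ t in a..x, (x - t) ^ (-α) * w t)
      = Real.Gamma (1 - α) * ∫ x in a..b, φ x * U x := by
    rw [← intervalIntegral.integral_const_mul]
    apply intervalIntegral.integral_congr
    intro x hx
    dsimp only
    rw [Set.uIcc_of_le hab.le] at hx
    rw [hφe_eq x hx, hUeq x hx]
    field_simp
  have hRα : (∫ t in a..b, w t * ∫ x in t..b, (x - t) ^ (-α) * φe x)
      = Real.Gamma (1 - α) * ∫ t in a..b, w t * K t := by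
    rw [← intervalIntegral.integral_const_mul]
    apply intervalIntegral.integral_congr
    intro t ht
    dsimp only
    rw [Set.uIcc_of_le hab.le] at ht
    have hinner : (∫ x in t..b, (x - t) ^ (-α) * φe x)
        = ∫ x in t..b, (x - t) ^ (-α) * φ x := by
      apply intervalIntegral.integral_congr
      intro x hx
      dsimp only
      rw [Set.uIcc_of_le ht.2] at hx
      rw [hφe_eq x ⟨le_trans ht.1 hx.1, hx.2⟩]
    rw [hinner]
    simp only [hKdef]
    field_simp
  have hφU : (∫ x in a..b, φ x * U x) = ∫ t in a..b, w t * K t := by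
    apply mul_left_cancel₀ (ne_of_gt hΓα)
    rw [← hLα, ← hRα]; exact hswapα
  have hibpα : (∫ t in a..b, w t * K t) = -∫ t in a..b, deriv K t * H t :=
    FracIso.ibp hab.le hHd hKd hwB hK'int hHa hHb
  have hαside : (∫ x in a..b, φ x * U x) = ∫ t in a..b, A t * H t := by
    rw [hφU, hibpα, ← intervalIntegral.integral_neg]
    apply intervalIntegral.integral_congr
    intro t _
    dsimp only
    rw [hA_eq t]; ring
  -- β side
  have hswapβ := FracIso.swap_kernel_right a b hab hβ1 ψe w hψe hwmeas hwint
  have hLβ : (∫ x in a..b, ψe x * ∫ t in x..b, (t - x) ^ (-β) * w t)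
      = Real.Gamma (1 - β) * -∫ x in a..b, ψ x * V x := by
    rw [← intervalIntegral.integral_neg, ← intervalIntegral.integral_const_mul]
    apply intervalIntegral.integral_congr
    intro x hx
    dsimp only
    rw [Set.uIcc_of_le hab.le] at hx
    rw [hψe_eq x hx, hVeq x hx]
    field_simp
  have hRβ : (∫ t in a..b, w t * ∫ x in a..t, (t - x) ^ (-β) * ψe x)
      = Real.Gamma (1 - β) * ∫ t in a..b, w t * M t := by
    rw [← intervalIntegral.integral_const_mul]
    apply intervalIntegral.integral_congr
    intro t ht
    dsimp only
    rw [Set.uIcc_of_le hab.le] at ht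
    have hinner : (∫ x in a..t, (t - x) ^ (-β) * ψe x)
        = ∫ x in a..t, (t - x) ^ (-β) * ψ x := by
      apply intervalIntegral.integral_congr
      intro x hx
      dsimp only
      rw [Set.uIcc_of_le ht.1] at hx
      rw [hψe_eq x ⟨hx.1, le_trans hx.2 ht.2⟩]
    rw [hinner]
    simp only [hMdef]
    field_simp
  have hψV : -(∫ x in a..b, ψ x * V x) = ∫ t in a..b, w t * M t := by
    apply mul_left_cancel₀ (ne_of_gt hΓβ)
    rw [← hRβ]
    have := hswapβ
    rw [hLβ] at this
    exact this
  have hibpβ : (∫ t in a..b, w t * M t) = -∫ t in a..b, deriv M t * H t :=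
    FracIso.ibp hab.le hHd hMd hwB hM'int hHa hHb
  have hβside : (∫ x in a..b, ψ x * V x) = ∫ t in a..b, B t * H t := by
    have h1 : (∫ x in a..b, ψ x * V x) = ∫ t in a..b, deriv M t * H t := by
      have := hψV
      rw [hibpβ] at this
      linarith
    rw [h1]
    apply intervalIntegral.integral_congr
    intro t _
    dsimp only
    rw [hB_eq t]
  -- splitting of partial derivatives of F
  have hd2F : ∀ x ∈ Set.Icc a b, ∀ Y Uu Vv : ℝ,
      d2 F x Y Uu Vv = d2 L x Y Uu Vv + d2 (fun p q r s => lam * g p q r s) x Y Uu Vv := by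
    intro x hx Y Uu Vv
    have h1 := FracIso.slice2 hL hx Y Uu Vv
    have h2 := (FracIso.slice2 hg hx Y Uu Vv).const_mul lam
    have hfun : (fun z => F x z Uu Vv) = fun z => L x z Uu Vv + lam * g x z Uu Vv := by
      funext z; simp [hFdef, combo, one_mul]
    have hsum : HasDerivAt (fun z => F x z Uu Vv)
        (FracIso.FD a b L (x, Y, Uu, Vv) (0, 1, 0, 0)
          + lam * FracIso.FD a b g (x, Y, Uu, Vv) (0, 1, 0, 0)) Y := by
      rw [hfun]; exact h1.add h2
    simp only [d2]
    rw [hsum.deriv, h1.deriv, h2.deriv]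
  have hd3F : ∀ x ∈ Set.Icc a b, ∀ Y Uu Vv : ℝ,
      d3 F x Y Uu Vv = d3 L x Y Uu Vv + d3 (fun p q r s => lam * g p q r s) x Y Uu Vv := by
    intro x hx Y Uu Vv
    have h1 := FracIso.slice3 hL hx Y Uu Vv
    have h2 := (FracIso.slice3 hg hx Y Uu Vv).const_mul lam
    have hfun : (fun z => F x Y z Vv) = fun z => L x Y z Vv + lam * g x Y z Vv := by
      funext z; simp [hFdef, combo, one_mul]
    have hsum : HasDerivAt (fun z => F x Y z Vv)
        (FracIso.FD a b L (x, Y, Uu, Vv) (0, 0, 1, 0)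
          + lam * FracIso.FD a b g (x, Y, Uu, Vv) (0, 0, 1, 0)) Uu := by
      rw [hfun]; exact h1.add h2
    simp only [d3]
    rw [hsum.deriv, h1.deriv, h2.deriv]
  have hd4F : ∀ x ∈ Set.Icc a b, ∀ Y Uu Vv : ℝ,
      d4 F x Y Uu Vv = d4 L x Y Uu Vv + d4 (fun p q r s => lam * g p q r s) x Y Uu Vv := by
    intro x hx Y Uu Vv
    have h1 := FracIso.slice4 hL hx Y Uu Vv
    have h2 := (FracIso.slice4 hg hx Y Uu Vv).const_mul lam
    have hfun : (fun z => F x Y Uu z) = fun z => L x Y Uu z + lam * g x Y Uu z := by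
      funext z; simp [hFdef, combo, one_mul]
    have hsum : HasDerivAt (fun z => F x Y Uu z)
        (FracIso.FD a b L (x, Y, Uu, Vv) (0, 0, 0, 1)
          + lam * FracIso.FD a b g (x, Y, Uu, Vv) (0, 0, 0, 1)) Vv := by
      rw [hfun]; exact h1.add h2
    simp only [d4]
    rw [hsum.deriv, h1.deriv, h2.deriv]
  -- pointwise convexity inequality
  have hconvF : ∀ x ∈ Set.Icc a b,
      lag a b α β F y x - lag a b α β F y₀ x
        ≥ d2lag a b α β F y₀ x * H x + φ x * U x + ψ x * V x := by
    intro x hx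
    have hyx : y x = y₀ x + H x := by simp [hHdef]
    have hux : caputoLeft a α y x = caputoLeft a α y₀ x + U x := by simp [hUdef]
    have hvx : caputoRight b β y x = caputoRight b β y₀ x + V x := by simp [hVdef]
    have hcL := hconvL x hx (y₀ x) (caputoLeft a α y₀ x) (caputoRight b β y₀ x)
      (H x) (U x) (V x)
    have hcg := hconvg x hx (y₀ x) (caputoLeft a α y₀ x) (caputoRight b β y₀ x)
      (H x) (U x) (V x)
    have hd2 := hd2F x hx (y₀ x) (caputoLeft a α y₀ x) (caputoRight b β y₀ x)
    have hd3 := hd3F x hx (y₀ x) (caputoLeft a α y₀ x) (caputoRight b β y₀ x)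
    have hd4 := hd4F x hx (y₀ x) (caputoLeft a α y₀ x) (caputoRight b β y₀ x)
    have hlag1 : lag a b α β F y x
        = L x (y₀ x + H x) (caputoLeft a α y₀ x + U x) (caputoRight b β y₀ x + V x)
          + lam * g x (y₀ x + H x) (caputoLeft a α y₀ x + U x)
            (caputoRight b β y₀ x + V x) := by
      simp only [lag, hFdef, combo, one_mul, hyx, hux, hvx]
    have hlag0 : lag a b α β F y₀ x
        = L x (y₀ x) (caputoLeft a α y₀ x) (caputoRight b β y₀ x)
          + lam * g x (y₀ x) (caputoLeft a α y₀ x) (caputoRight b β y₀ x) := by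
      simp only [lag, hFdef, combo, one_mul]
    have hd2lag : d2lag a b α β F y₀ x
        = d2 F x (y₀ x) (caputoLeft a α y₀ x) (caputoRight b β y₀ x) := rfl
    have hφx : φ x = d3 F x (y₀ x) (caputoLeft a α y₀ x) (caputoRight b β y₀ x) := rfl
    have hψx : ψ x = d4 F x (y₀ x) (caputoLeft a α y₀ x) (caputoRight b β y₀ x) := rfl
    rw [hlag1, hlag0, hd2lag, hφx, hψx, hd2, hd3, hd4]
    linarith [hcL, hcg]
  -- pointwise lower bound via the Euler–Lagrange equation
  set R : ℝ → ℝ := fun x => -((A x + B x) * H x) + (φ x * U x + ψ x * V x) with hRdef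
  have hpoint : ∀ x ∈ Set.Icc a b, R x ≤ lag a b α β F y x - lag a b α β F y₀ x := by
    intro x hx
    have hel := hEL x hx
    have h1 := hconvF x hx
    have h2 : d2lag a b α β F y₀ x = -(A x + B x) := by linarith
    have : R x = d2lag a b α β F y₀ x * H x + φ x * U x + ψ x * V x := by
      rw [h2, hRdef]; ring
    linarith [this, h1]
  -- integrability of all integrands
  have hIcc : Set.uIcc a b = Set.Icc a b := Set.uIcc_of_le hab.le
  have hlagLy : IntervalIntegrable (lag a b α β L y) volume a b := by
    apply ContinuousOn.intervalIntegrable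
    rw [hIcc]; exact FracIso.lag_continuousOn hL hcurvey
  have hlagLy₀ : IntervalIntegrable (lag a b α β L y₀) volume a b := by
    apply ContinuousOn.intervalIntegrable
    rw [hIcc]; exact FracIso.lag_continuousOn hL hcurve₀
  have hlaggy : IntervalIntegrable (lag a b α β g y) volume a b := by
    apply ContinuousOn.intervalIntegrable
    rw [hIcc]; exact FracIso.lag_continuousOn hg hcurvey
  have hlaggy₀ : IntervalIntegrable (lag a b α β g y₀) volume a b := by
    apply ContinuousOn.intervalIntegrable
    rw [hIcc]; exact FracIso.lag_continuousOn hg hcurve₀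
  have hlagFy : IntervalIntegrable (lag a b α β F y) volume a b := by
    apply ContinuousOn.intervalIntegrable
    rw [hIcc]; exact FracIso.lag_continuousOn hF hcurvey
  have hlagFy₀ : IntervalIntegrable (lag a b α β F y₀) volume a b := by
    apply ContinuousOn.intervalIntegrable
    rw [hIcc]; exact FracIso.lag_continuousOn hF hcurve₀
  have hAH : IntervalIntegrable (fun x => A x * H x) volume a b := by
    apply ContinuousOn.intervalIntegrable
    rw [hIcc]; exact hAc.mul hHc
  have hBH : IntervalIntegrable (fun x => B x * H x) volume a b := by
    apply ContinuousOn.intervalIntegrable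
    rw [hIcc]; exact hBc.mul hHc
  have hφU : IntervalIntegrable (fun x => φ x * U x) volume a b := by
    apply ContinuousOn.intervalIntegrable
    rw [hIcc]; exact hφc.mul hUc
  have hψVi : IntervalIntegrable (fun x => ψ x * V x) volume a b := by
    apply ContinuousOn.intervalIntegrable
    rw [hIcc]; exact hψc.mul hVc
  have hRint : IntervalIntegrable R volume a b := by
    apply ContinuousOn.intervalIntegrable
    rw [hIcc]
    exact (((hAc.add hBc).mul hHc).neg).add ((hφc.mul hUc).add (hψc.mul hVc))
  -- ∫ R = 0
  have hRzero : (∫ x in a..b, R x) = 0 := by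
    have hcongr : (∫ x in a..b, R x)
        = ∫ x in a..b, (-(A x * H x) + (-(B x * H x) + (φ x * U x + ψ x * V x))) := by
      apply intervalIntegral.integral_congr
      intro x _
      dsimp only [hRdef]
      ring
    have hAHn : IntervalIntegrable (fun x => -(A x * H x)) volume a b := by
      apply ContinuousOn.intervalIntegrable
      rw [hIcc]; exact (hAc.mul hHc).neg
    have hBHn : IntervalIntegrable (fun x => -(B x * H x)) volume a b := by
      apply ContinuousOn.intervalIntegrable
      rw [hIcc]; exact (hBc.mul hHc).neg
    rw [hcongr]
    rw [intervalIntegral.integral_add hAHn (hBHn.add (hφU.add hψVi)),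
      intervalIntegral.integral_add hBHn (hφU.add hψVi),
      intervalIntegral.integral_add hφU hψVi,
      intervalIntegral.integral_neg, intervalIntegral.integral_neg]
    rw [hαside, hβside]
    ring
  -- monotonicity
  have hmono : (∫ x in a..b, R x)
      ≤ ∫ x in a..b, (lag a b α β F y x - lag a b α β F y₀ x) :=
    intervalIntegral.integral_mono_on hab.le hRint (hlagFy.sub hlagFy₀) hpoint
  have hsub : (∫ x in a..b, (lag a b α β F y x - lag a b α β F y₀ x))
      = (∫ x in a..b, lag a b α β F y x) - ∫ x in a..b, lag a b α β F y₀ x :=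
    intervalIntegral.integral_sub hlagFy hlagFy₀
  -- split ∫ lag F
  have hFy_split : (∫ x in a..b, lag a b α β F y x)
      = (∫ x in a..b, lag a b α β L y x) + lam * ∫ x in a..b, lag a b α β g y x := by
    have h1 : (∫ x in a..b, lag a b α β F y x)
        = ∫ x in a..b, (lag a b α β L y x + lam * lag a b α β g y x) := by
      apply intervalIntegral.integral_congr
      intro x _
      simp [lag, hFdef, combo, one_mul]
    rw [h1, intervalIntegral.integral_add hlagLy (hlaggy.const_mul lam),
      intervalIntegral.integral_const_mul]
  have hFy₀_split : (∫ x in a..b, lag a b α β F y₀ x)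
      = (∫ x in a..b, lag a b α β L y₀ x) + lam * ∫ x in a..b, lag a b α β g y₀ x := by
    have h1 : (∫ x in a..b, lag a b α β F y₀ x)
        = ∫ x in a..b, (lag a b α β L y₀ x + lam * lag a b α β g y₀ x) := by
      apply intervalIntegral.integral_congr
      intro x _
      simp [lag, hFdef, combo, one_mul]
    rw [h1, intervalIntegral.integral_add hlagLy₀ (hlaggy₀.const_mul lam),
      intervalIntegral.integral_const_mul]
  rw [hRzero, hsub] at hmono
  rw [hFy_split, hFy₀_split, hcony, hcon] at hmono
  linarith
end
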